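/- arXiv:math/9611208 — 4 statements merged into one kernel-verified Lean document; each statement's English description precedes it below -/
import Mathlib

section
/- Let κ be an inaccessible cardinal and φ(x) an L∈-formula in one free variable without parameters. Suppose M := {x ∈ V_κ : (V_κ,∈) ⊨ φ(x)} is a transitive set and M ∩ Ord is unbounded in κ. If (V_κ,∈) has a proper elementary end extension (N,F), then the substructure of (N,F) with underlying set {x ∈ N : (N,F) ⊨ φ(x)} is a proper elementary end extension of (M,∈); in particular, (M,∈) has a proper elementary end extension. -/
open FirstOrder Language

/-- Relation symbols of the language of set theory: one binary symbol for membership. -/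
inductive memRelSym : ℕ → Type
  | mem : memRelSym 2

/-- The first-order language `L∈` of set theory, with a single binary relation symbol. -/
def LIn : FirstOrder.Language := ⟨fun _ => Empty, memRelSym⟩

/-- The membership symbol of `L∈`. -/
abbrev memSymb : LIn.Relations 2 := memRelSym.mem

/-- Any class of ZF-sets is an `L∈`-structure with true membership. -/
instance memStructure (A : Set ZFSet) : LIn.Structure A where
  funMap := fun f _ => f.elim
  RelMap := fun r v => match r with | .mem => (v 0).val ∈ (v 1).val

/-- The interpretation of the membership symbol in an arbitrary `L∈`-structure. -/
def memRel {N : Type*} [LIn.Structure N] (x y : N) : Prop :=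
  Structure.RelMap memSymb ![x, y]

/-- The class of sets of rank `< o`, i.e. the level `V_o` of the cumulative hierarchy. -/
def Vclass (o : Ordinal) : Set ZFSet := {x | x.rank < o}

/-- The induced `L∈`-structure on a subset of an `L∈`-structure. -/
instance subStructure {N : Type*} [LIn.Structure N] (S : Set N) : LIn.Structure S where
  funMap := fun f _ => f.elim
  RelMap := fun r v => match r with | .mem => memRel (v 0).val (v 1).val

/-- `f` is a proper elementary end embedding between `L∈`-structures: it is injective,
elementary, its range is downward closed under the membership relation (endness), and
it is not surjective (properness). -/
def IsProperEEEmb {A : Type*} {B : Type*} [LIn.Structure A] [LIn.Structure B]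
    (f : A → B) : Prop :=
  Function.Injective f ∧
  (∀ (n : ℕ) (φ : LIn.Formula (Fin n)) (v : Fin n → A),
      Formula.Realize φ (f ∘ v) ↔ Formula.Realize φ v) ∧
  (∀ (a : A) (b : B), memRel b (f a) → b ∈ Set.range f) ∧
  ¬ Function.Surjective f

noncomputable def ordZ (o : Ordinal.{u}) : ZFSet.{u} :=
  ZFSet.range fun i : o.ToType => ordZ ((Ordinal.ToType.mk (o := o)).symm i).val
termination_by o
decreasing_by exact ((Ordinal.ToType.mk (o := o)).symm i).2

theorem mem_ordZ {x : ZFSet.{u}} {o : Ordinal.{u}} :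
    x ∈ ordZ o ↔ ∃ p < o, x = ordZ p := by
  rw [ordZ, ZFSet.mem_range]
  constructor
  · rintro ⟨i, rfl⟩
    exact ⟨_, ((Ordinal.ToType.mk (o := o)).symm i).2, rfl⟩
  · rintro ⟨p, hp, rfl⟩
    exact ⟨Ordinal.ToType.mk (o := o) ⟨p, hp⟩, by simp⟩

theorem rank_ordZ (o : Ordinal.{u}) : (ordZ o).rank = o := by
  induction o using Ordinal.induction with
  | h o IH =>
    apply le_antisymm
    · rw [ZFSet.rank_le_iff]
      rintro y hy
      rw [mem_ordZ] at hy
      obtain ⟨p, hp, rfl⟩ := hy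
      rwa [IH p hp]
    · by_contra h
      push_neg at h
      exact lt_irrefl _ (ZFSet.lt_rank_iff.mpr ⟨ordZ (ordZ o).rank,
        mem_ordZ.mpr ⟨_, h, rfl⟩, (IH _ h).ge⟩)

theorem ordZ_mem_ordZ {p o : Ordinal.{u}} (h : p < o) : ordZ p ∈ ordZ o :=
  mem_ordZ.mpr ⟨p, h, rfl⟩

/-- The `o`-th level of the cumulative hierarchy as a ZF-set. -/
noncomputable def Vz (o : Ordinal.{u}) : ZFSet.{u} :=
  ZFSet.sUnion (ZFSet.range fun i : o.ToType =>
    ZFSet.powerset (Vz ((Ordinal.ToType.mk (o := o)).symm i).val))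
termination_by o
decreasing_by exact ((Ordinal.ToType.mk (o := o)).symm i).2

theorem mem_Vz {z : ZFSet.{u}} {o : Ordinal.{u}} : z ∈ Vz o ↔ z.rank < o := by
  induction o using Ordinal.induction generalizing z with
  | h o IH =>
    rw [Vz, ZFSet.mem_sUnion]
    constructor
    · rintro ⟨w, hw, hzw⟩
      rw [ZFSet.mem_range] at hw
      obtain ⟨i, rfl⟩ := hw
      rw [ZFSet.mem_powerset] at hzw
      have hp : ((Ordinal.ToType.mk (o := o)).symm i).val < o :=
        ((Ordinal.ToType.mk (o := o)).symm i).2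
      refine lt_of_le_of_lt (ZFSet.rank_le_iff.mpr ?_) hp
      intro y hy
      exact (IH _ hp).mp (hzw hy)
    · intro hz
      refine ⟨ZFSet.powerset (Vz z.rank),
        ZFSet.mem_range.mpr ⟨Ordinal.ToType.mk (o := o) ⟨z.rank, hz⟩, by simp⟩, ?_⟩
      rw [ZFSet.mem_powerset]
      intro y hy
      exact (IH _ hz).mpr (ZFSet.rank_lt_of_mem (x := z) hy)

theorem rank_Vz_le (o : Ordinal.{u}) : (Vz o).rank ≤ o :=
  ZFSet.rank_le_iff.mpr fun {_} hy => mem_Vz.mp hy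

/-- Members of ordinals are ordinals. -/
theorem isOrdinal_mem_isOrdinal {y z : ZFSet.{u}} (hy : y.IsOrdinal) (hz : z ∈ y) :
    z.IsOrdinal := by
  constructor
  · intro w hw u hu
    exact hy.mem_trans' hu hw hz
  · intro u v w huv hvw hwz
    exact hy.mem_trans' huv hvw (hy.isTransitive.mem_trans hwz hz)

/-- Every rank below the rank of an ordinal is attained by a member. -/
theorem exists_mem_rank_eq {y : ZFSet.{u}} (hy : y.IsOrdinal) :
    ∀ ρ, ρ < y.rank → ∃ z ∈ y, z.rank = ρ := by
  induction y using ZFSet.inductionOn with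
  | h y IH =>
    intro ρ hρ
    obtain ⟨z, hzy, hz⟩ := ZFSet.lt_rank_iff.mp hρ
    rcases eq_or_lt_of_le hz with h | h
    · exact ⟨z, hzy, h.symm⟩
    · obtain ⟨w, hwz, hw⟩ := IH z hzy (isOrdinal_mem_isOrdinal hy hzy) ρ h
      exact ⟨w, hy.isTransitive.mem_trans hwz hzy, hw⟩

/-- Every (von Neumann) ordinal ZF-set is the canonical set of its rank. -/
theorem isOrdinal_eq_ordZ {y : ZFSet.{u}} (hy : y.IsOrdinal) : y = ordZ y.rank := by
  induction y using ZFSet.inductionOn with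
  | h y IH =>
    apply ZFSet.ext
    intro w
    rw [mem_ordZ]
    constructor
    · intro hw
      exact ⟨w.rank, ZFSet.rank_lt_of_mem hw,
        IH w hw (isOrdinal_mem_isOrdinal hy hw)⟩
    · rintro ⟨p, hp, rfl⟩
      obtain ⟨z, hzy, rfl⟩ := exists_mem_rank_eq hy p hp
      rw [← IH z hzy (isOrdinal_mem_isOrdinal hy hzy)]
      exact hzy


section FmlLayer

section Fml
open FirstOrder.Language.BoundedFormula
variable {α : Type*} {n : ℕ}

def tl (t : LIn.Term (α ⊕ Fin n)) : LIn.Term (α ⊕ Fin (n+1)) :=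
  t.relabel (Sum.map id Fin.castSucc)

def vb (i : Fin n) : LIn.Term (α ⊕ Fin n) := Term.var (Sum.inr i)

def memT (t u : LIn.Term (α ⊕ Fin n)) : LIn.BoundedFormula α n :=
  memSymb.boundedFormula₂ t u

variable {X : Type*} [LIn.Structure X]

@[simp] lemma realize_vb {s : α ⊕ Fin n → X} (i : Fin n) :
    Term.realize s (vb i) = s (Sum.inr i) := rfl

@[simp] lemma realize_tl {v : α → X} {xs : Fin n → X} {a : X} (t : LIn.Term (α ⊕ Fin n)) :
    Term.realize (Sum.elim v (Fin.snoc xs a)) (tl t) = Term.realize (Sum.elim v xs) t := by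
  rw [tl, Term.realize_relabel]
  congr 1
  funext u
  rcases u with u | u <;> simp

@[simp] lemma realize_memT {v : α → X} {xs : Fin n → X} (t u : LIn.Term (α ⊕ Fin n)) :
    (memT t u).Realize v xs ↔
      memRel (Term.realize (Sum.elim v xs) t) (Term.realize (Sum.elim v xs) u) := by
  rw [memT, BoundedFormula.realize_rel₂, memRel]

end Fml

section Fml2
open FirstOrder.Language.BoundedFormula
variable {α : Type*} {n : ℕ} {X : Type*} [LIn.Structure X]

/-- semantic: q = {z} -/
def SingSem (q z : X) : Prop := ∀ u, memRel u q ↔ u = z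
/-- semantic: q = {z,a} -/
def DoubSem (q z a : X) : Prop := ∀ u, memRel u q ↔ (u = z ∨ u = a)
/-- semantic: p = ⟨z,a⟩ (Kuratowski) -/
def PairSem (p z a : X) : Prop := ∀ q, memRel q p ↔ (SingSem q z ∨ DoubSem q z a)
/-- semantic: ⟨z,a⟩ ∈ r -/
def PairMemSem (z a r : X) : Prop := ∃ p, memRel p r ∧ PairSem p z a
/-- semantic rank-bounding relation -/
def RkSem (x y : X) : Prop :=
  ∃ t, memRel x t ∧ (∀ z w, memRel z t → memRel w z → memRel w t) ∧
    ∃ r, (∀ z, memRel z t → ∃ a, PairMemSem z a r) ∧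
      ((∀ z w b a, memRel z t → memRel w z → PairMemSem z b r → PairMemSem w a r →
        memRel a b) ∧
      ∃ a, PairMemSem x a r ∧ memRel a y)

def singF (q z : LIn.Term (α ⊕ Fin n)) : LIn.BoundedFormula α n :=
  ∀' ((memT (vb (Fin.last n)) (tl q)).iff (Term.bdEqual (vb (Fin.last n)) (tl z)))

def doubF (q z a : LIn.Term (α ⊕ Fin n)) : LIn.BoundedFormula α n :=
  ∀' ((memT (vb (Fin.last n)) (tl q)).iff
    ((Term.bdEqual (vb (Fin.last n)) (tl z)) ⊔ (Term.bdEqual (vb (Fin.last n)) (tl a))))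

def pairF (p z a : LIn.Term (α ⊕ Fin n)) : LIn.BoundedFormula α n :=
  ∀' ((memT (vb (Fin.last n)) (tl p)).iff
    ((singF (vb (Fin.last n)) (tl z)) ⊔ (doubF (vb (Fin.last n)) (tl z) (tl a))))

def pairMemF (z a r : LIn.Term (α ⊕ Fin n)) : LIn.BoundedFormula α n :=
  ∃' ((memT (vb (Fin.last n)) (tl r)) ⊓ pairF (vb (Fin.last n)) (tl z) (tl a))

def exPairF (z r : LIn.Term (α ⊕ Fin n)) : LIn.BoundedFormula α n :=
  ∃' (pairMemF (tl z) (vb (Fin.last n)) (tl r))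

def transF (t : LIn.Term (α ⊕ Fin n)) : LIn.BoundedFormula α n :=
  ∀' ∀' ((memT (tl (vb (Fin.last n))) (tl (tl t))) ⟹
    ((memT (vb (Fin.last (n+1))) (tl (vb (Fin.last n)))) ⟹
      (memT (vb (Fin.last (n+1))) (tl (tl t)))))

def c1F (t r : LIn.Term (α ⊕ Fin n)) : LIn.BoundedFormula α n :=
  ∀' ((memT (vb (Fin.last n)) (tl t)) ⟹ exPairF (vb (Fin.last n)) (tl r))

def c2F (t r : LIn.Term (α ⊕ Fin n)) : LIn.BoundedFormula α n :=
  ∀' ∀' ∀' ∀' ((memT (tl (tl (tl (vb (Fin.last n))))) (tl (tl (tl (tl t))))) ⟹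
    ((memT (tl (tl (vb (Fin.last (n+1))))) (tl (tl (tl (vb (Fin.last n)))))) ⟹
      ((pairMemF (tl (tl (tl (vb (Fin.last n))))) (tl (vb (Fin.last (n+2))))
          (tl (tl (tl (tl r))))) ⟹
        ((pairMemF (tl (tl (vb (Fin.last (n+1))))) (vb (Fin.last (n+3)))
            (tl (tl (tl (tl r))))) ⟹
          (memT (vb (Fin.last (n+3))) (tl (vb (Fin.last (n+2)))))))))

def rkF (x y : LIn.Term (α ⊕ Fin n)) : LIn.BoundedFormula α n :=
  ∃' ((memT (tl x) (vb (Fin.last n))) ⊓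
    ((transF (vb (Fin.last n))) ⊓
      ∃' ((c1F (tl (vb (Fin.last n))) (vb (Fin.last (n+1)))) ⊓
        ((c2F (tl (vb (Fin.last n))) (vb (Fin.last (n+1)))) ⊓
          ∃' ((pairMemF (tl (tl (tl x))) (vb (Fin.last (n+2)))
              (tl (vb (Fin.last (n+1))))) ⊓
            (memT (vb (Fin.last (n+2))) (tl (tl (tl y)))))))))

@[simp] lemma realize_singF {v : α → X} {xs : Fin n → X} (q z : LIn.Term (α ⊕ Fin n)) :
    (singF q z).Realize v xs ↔
      SingSem (Term.realize (Sum.elim v xs) q) (Term.realize (Sum.elim v xs) z) := by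
  simp [singF, SingSem, BoundedFormula.realize_all, BoundedFormula.realize_iff]

@[simp] lemma realize_doubF {v : α → X} {xs : Fin n → X} (q z a : LIn.Term (α ⊕ Fin n)) :
    (doubF q z a).Realize v xs ↔
      DoubSem (Term.realize (Sum.elim v xs) q) (Term.realize (Sum.elim v xs) z)
        (Term.realize (Sum.elim v xs) a) := by
  simp [doubF, DoubSem, BoundedFormula.realize_all, BoundedFormula.realize_iff]

@[simp] lemma realize_pairF {v : α → X} {xs : Fin n → X} (p z a : LIn.Term (α ⊕ Fin n)) :
    (pairF p z a).Realize v xs ↔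
      PairSem (Term.realize (Sum.elim v xs) p) (Term.realize (Sum.elim v xs) z)
        (Term.realize (Sum.elim v xs) a) := by
  simp [pairF, PairSem, BoundedFormula.realize_all, BoundedFormula.realize_iff]

@[simp] lemma realize_pairMemF {v : α → X} {xs : Fin n → X} (z a r : LIn.Term (α ⊕ Fin n)) :
    (pairMemF z a r).Realize v xs ↔
      PairMemSem (Term.realize (Sum.elim v xs) z) (Term.realize (Sum.elim v xs) a)
        (Term.realize (Sum.elim v xs) r) := by
  simp [pairMemF, PairMemSem, BoundedFormula.realize_ex]

@[simp] lemma realize_exPairF {v : α → X} {xs : Fin n → X} (z r : LIn.Term (α ⊕ Fin n)) :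
    (exPairF z r).Realize v xs ↔
      ∃ a, PairMemSem (Term.realize (Sum.elim v xs) z) a (Term.realize (Sum.elim v xs) r) := by
  simp [exPairF, BoundedFormula.realize_ex]

@[simp] lemma realize_transF {v : α → X} {xs : Fin n → X} (t : LIn.Term (α ⊕ Fin n)) :
    (transF t).Realize v xs ↔
      (∀ z w, memRel z (Term.realize (Sum.elim v xs) t) → memRel w z →
        memRel w (Term.realize (Sum.elim v xs) t)) := by
  simp [transF, BoundedFormula.realize_all]

@[simp] lemma realize_c1F {v : α → X} {xs : Fin n → X} (t r : LIn.Term (α ⊕ Fin n)) :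
    (c1F t r).Realize v xs ↔
      (∀ z, memRel z (Term.realize (Sum.elim v xs) t) →
        ∃ a, PairMemSem z a (Term.realize (Sum.elim v xs) r)) := by
  simp [c1F, BoundedFormula.realize_all]

@[simp] lemma realize_c2F {v : α → X} {xs : Fin n → X} (t r : LIn.Term (α ⊕ Fin n)) :
    (c2F t r).Realize v xs ↔
      (∀ z w b a, memRel z (Term.realize (Sum.elim v xs) t) → memRel w z →
        PairMemSem z b (Term.realize (Sum.elim v xs) r) →
        PairMemSem w a (Term.realize (Sum.elim v xs) r) → memRel a b) := by
  simp [c2F, BoundedFormula.realize_all]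

@[simp] lemma realize_rkF {v : α → X} {xs : Fin n → X} (x y : LIn.Term (α ⊕ Fin n)) :
    (rkF x y).Realize v xs ↔
      RkSem (Term.realize (Sum.elim v xs) x) (Term.realize (Sum.elim v xs) y) := by
  simp [rkF, RkSem, BoundedFormula.realize_ex]

end Fml2

section Fml3
open FirstOrder.Language.BoundedFormula
variable {α : Type*} {n : ℕ} {X : Type*} [LIn.Structure X]

/-- The formula `φ(x_i)` in a context of `n` bound variables. -/
def phiAt (φ : LIn.Formula (Fin 1)) (i : Fin n) : LIn.BoundedFormula α n :=
  BoundedFormula.relabel (fun _ : Fin 1 => Sum.inr i) φ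

@[simp] lemma realize_phiAt (φ : LIn.Formula (Fin 1)) (i : Fin n) {v : α → X}
    {xs : Fin n → X} : (phiAt φ i).Realize v xs ↔ Formula.Realize φ (fun _ => xs i) := by
  rw [phiAt, BoundedFormula.realize_relabel]
  have e1 : (Sum.elim v (xs ∘ Fin.castAdd 0) ∘ (fun _ : Fin 1 => Sum.inr i))
      = (fun _ => xs i) := by
    funext u
    show xs (Fin.castAdd 0 i) = xs i
    rfl
  have e2 : (xs ∘ Fin.natAdd n : Fin 0 → X) = default := Subsingleton.elim _ _
  rw [e1, e2]
  rfl

@[simp] lemma snoc_one_zero {Y : Type*} (a : Y) :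
    (Fin.snoc (default : Fin 0 → Y) a : Fin 1 → Y) 0 = a := by
  have h : (0 : Fin 1) = Fin.last 0 := rfl
  rw [h, Fin.snoc_last]

@[simp] lemma snoc_two_zero {Y : Type*} (a b : Y) :
    (Fin.snoc (Fin.snoc (default : Fin 0 → Y) a) b : Fin 2 → Y) 0 = a := by
  have h : (0 : Fin 2) = Fin.castSucc (Fin.last 0) := rfl
  rw [h, Fin.snoc_castSucc]
  exact snoc_one_zero a

@[simp] lemma snoc_two_one {Y : Type*} (a b : Y) :
    (Fin.snoc (Fin.snoc (default : Fin 0 → Y) a) b : Fin 2 → Y) 1 = b := by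
  have h : (1 : Fin 2) = Fin.last 1 := rfl
  rw [h, Fin.snoc_last]

/-- `∀x ∃y (φ(y) ∧ Rk(x,y))`. -/
def sigmaF (φ : LIn.Formula (Fin 1)) : LIn.Formula (Fin 0) :=
  ∀' ∃' ((phiAt φ (Fin.last 1)) ⊓ rkF (vb ((Fin.last 0).castSucc)) (vb (Fin.last 1)))

lemma realize_sigmaF (φ : LIn.Formula (Fin 1)) (v : Fin 0 → X) :
    Formula.Realize (sigmaF φ) v ↔
      ∀ x : X, ∃ y : X, Formula.Realize φ (fun _ => y) ∧ RkSem x y := by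
  rw [Formula.Realize, sigmaF]
  simp [BoundedFormula.realize_all, BoundedFormula.realize_ex]

/-- `∀x (Rk(x,c) → x ∈ w)` with free variables `c = v 0`, `w = v 1`. -/
def psiF : LIn.Formula (Fin 2) :=
  ∀' ((rkF (vb (Fin.last 0)) (Term.var (Sum.inl 0))) ⟹
    memT (vb (Fin.last 0)) (Term.var (Sum.inl 1)))

lemma realize_psiF (v : Fin 2 → X) :
    Formula.Realize psiF v ↔ ∀ x : X, RkSem x (v 0) → memRel x (v 1) := by
  rw [Formula.Realize, psiF]
  simp [BoundedFormula.realize_all]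

end Fml3

section Relativize
open FirstOrder.Language

/-- Relativization of a formula to the class defined by `φ`: every quantifier is
restricted to points satisfying `φ`. -/
def relativize (φ : LIn.Formula (Fin 1)) : ∀ {α : Type*} {m : ℕ},
    LIn.BoundedFormula α m → LIn.BoundedFormula α m
  | _, _, BoundedFormula.falsum => BoundedFormula.falsum
  | _, _, BoundedFormula.equal t u => BoundedFormula.equal t u
  | _, _, BoundedFormula.rel R ts => BoundedFormula.rel R ts
  | _, _, BoundedFormula.imp p q => (relativize φ p).imp (relativize φ q)
  | _, m, BoundedFormula.all p =>
      BoundedFormula.all ((phiAt φ (Fin.last m)).imp (relativize φ p))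

lemma realize_term_comp {A B : Type*} [LIn.Structure A] [LIn.Structure B]
    (ι : B → A) {γ : Type*} (g : γ → B) (t : LIn.Term γ) :
    Term.realize (ι ∘ g) t = ι (Term.realize g t) := by
  induction t with
  | var i => rfl
  | func f ts ih => exact f.elim

theorem realize_relativize {A B : Type*} [LIn.Structure A] [LIn.Structure B]
    (ι : B → A) (hι : Function.Injective ι)
    (hmem : ∀ x y : B, memRel x y ↔ memRel (ι x) (ι y))
    (φ : LIn.Formula (Fin 1))
    (hrange : ∀ a : A, a ∈ Set.range ι ↔ Formula.Realize φ (fun _ => a)) :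
    ∀ {m : ℕ} {α : Type*} (ψ : LIn.BoundedFormula α m) (v : α → B) (xs : Fin m → B),
      BoundedFormula.Realize (relativize φ ψ) (ι ∘ v) (ι ∘ xs) ↔ ψ.Realize v xs := by
  intro m α ψ
  have hcomp : ∀ {m : ℕ} (v : α → B) (xs : Fin m → B),
      Sum.elim (ι ∘ v) (ι ∘ xs) = ι ∘ Sum.elim v xs := by
    intro m v xs; funext z; rcases z with z | z <;> rfl
  have hrel : ∀ (f : Fin 2 → B),
      (Structure.RelMap (L := LIn) (M := A) memSymb (ι ∘ f) : Prop) ↔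
        Structure.RelMap (L := LIn) (M := B) memSymb f := by
    intro f
    have h1 : (ι ∘ f) = ![ι (f 0), ι (f 1)] := by funext i; fin_cases i <;> rfl
    have h2 : f = ![f 0, f 1] := by funext i; fin_cases i <;> rfl
    rw [h1]
    conv_rhs => rw [h2]
    exact (hmem (f 0) (f 1)).symm
  induction ψ with
  | falsum => exact fun v xs => by simp only [relativize]; exact Iff.rfl
  | equal t u =>
    intro v xs
    simp only [relativize]
    show Term.realize (Sum.elim (ι ∘ v) (ι ∘ xs)) t = Term.realize (Sum.elim (ι ∘ v) (ι ∘ xs)) u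
      ↔ Term.realize (Sum.elim v xs) t = Term.realize (Sum.elim v xs) u
    rw [hcomp, realize_term_comp, realize_term_comp]
    exact hι.eq_iff
  | rel R ts =>
    intro v xs
    simp only [relativize]
    cases R
    show (Structure.RelMap (L := LIn) (M := A) memSymb
        (fun i => Term.realize (Sum.elim (ι ∘ v) (ι ∘ xs)) (ts i)) : Prop)
      ↔ Structure.RelMap (L := LIn) (M := B) memSymb
        (fun i => Term.realize (Sum.elim v xs) (ts i))
    have h3 : (fun i => Term.realize (Sum.elim (ι ∘ v) (ι ∘ xs)) (ts i))
        = ι ∘ (fun i => Term.realize (Sum.elim v xs) (ts i)) := by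
      funext i
      rw [hcomp, realize_term_comp]
      rfl
    rw [h3]
    exact hrel _
  | imp p q ihp ihq =>
    intro v xs
    simp only [relativize, BoundedFormula.realize_imp]
    rw [ihp, ihq]
  | all p ih =>
    intro v xs
    simp only [relativize, BoundedFormula.realize_all, BoundedFormula.realize_imp,
      realize_phiAt, Fin.snoc_last]
    constructor
    · intro h b
      have hb := h (ι b) ((hrange (ι b)).mp ⟨b, rfl⟩)
      rwa [show Fin.snoc (ι ∘ xs) (ι b) = ι ∘ Fin.snoc xs b by rw [Fin.comp_snoc], ih] at hb
    · intro h a ha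
      obtain ⟨b, rfl⟩ := (hrange a).mpr ha
      rw [show Fin.snoc (ι ∘ xs) (ι b) = ι ∘ Fin.snoc xs b by rw [Fin.comp_snoc], ih]
      exact h b

end Relativize

end FmlLayer

section VBridge
variable {Λ : Ordinal.{u}}

lemma mem_Vclass_iff {x : ZFSet.{u}} : x ∈ Vclass Λ ↔ x.rank < Λ := Iff.rfl

lemma memRel_V {A : Set ZFSet.{u}} (x y : ↥A) : memRel x y ↔ x.val ∈ y.val := Iff.rfl

lemma mem_Vclass_of_mem {x y : ZFSet.{u}} (hy : y ∈ Vclass Λ) (hx : x ∈ y) :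
    x ∈ Vclass Λ := lt_trans (ZFSet.rank_lt_of_mem hx) hy

lemma singSem_V {q z : ↥(Vclass Λ)} : SingSem q z ↔ q.val = {z.val} := by
  constructor
  · intro h
    apply ZFSet.ext
    intro u
    rw [ZFSet.mem_singleton]
    constructor
    · intro hu
      exact congrArg Subtype.val ((h ⟨u, mem_Vclass_of_mem q.2 hu⟩).mp hu)
    · rintro rfl
      exact (h z).mpr rfl
  · intro h u
    rw [memRel_V, Subtype.ext_iff, h, ZFSet.mem_singleton]

lemma doubSem_V {q z a : ↥(Vclass Λ)} : DoubSem q z a ↔ q.val = {z.val, a.val} := by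
  constructor
  · intro h
    apply ZFSet.ext
    intro u
    rw [ZFSet.mem_pair]
    constructor
    · intro hu
      rcases (h ⟨u, mem_Vclass_of_mem q.2 hu⟩).mp hu with h' | h'
      · exact Or.inl (congrArg Subtype.val h')
      · exact Or.inr (congrArg Subtype.val h')
    · rintro (rfl | rfl)
      · exact (h z).mpr (Or.inl rfl)
      · exact (h a).mpr (Or.inr rfl)
  · intro h u
    rw [memRel_V, Subtype.ext_iff, Subtype.ext_iff, h, ZFSet.mem_pair]

lemma rank_singleton_lt (hΛ : Order.IsSuccLimit Λ) {z : ZFSet.{u}} (hz : z ∈ Vclass Λ) :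
    ({z} : ZFSet) ∈ Vclass Λ := by
  rw [mem_Vclass_iff, ZFSet.rank_singleton]
  exact hΛ.succ_lt hz

lemma rank_doub_lt (hΛ : Order.IsSuccLimit Λ) {z a : ZFSet.{u}} (hz : z ∈ Vclass Λ)
    (ha : a ∈ Vclass Λ) : ({z, a} : ZFSet) ∈ Vclass Λ := by
  rw [mem_Vclass_iff, ZFSet.rank_pair]
  exact max_lt (hΛ.succ_lt hz) (hΛ.succ_lt ha)

lemma rank_kpair_lt (hΛ : Order.IsSuccLimit Λ) {z a : ZFSet.{u}} (hz : z ∈ Vclass Λ)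
    (ha : a ∈ Vclass Λ) : ZFSet.pair z a ∈ Vclass Λ := by
  show ({{z}, {z, a}} : ZFSet) ∈ Vclass Λ
  exact rank_doub_lt hΛ (rank_singleton_lt hΛ hz) (rank_doub_lt hΛ hz ha)

lemma pairSem_V (hΛ : Order.IsSuccLimit Λ) {p z a : ↥(Vclass Λ)} :
    PairSem p z a ↔ p.val = ZFSet.pair z.val a.val := by
  constructor
  · intro h
    apply ZFSet.ext
    intro w
    show w ∈ p.val ↔ w ∈ ({{z.val}, {z.val, a.val}} : ZFSet)
    rw [ZFSet.mem_pair]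
    constructor
    · intro hw
      rcases (h ⟨w, mem_Vclass_of_mem p.2 hw⟩).mp hw with h' | h'
      · exact Or.inl (singSem_V.mp h')
      · exact Or.inr (doubSem_V.mp h')
    · rintro (rfl | rfl)
      · exact (h ⟨_, rank_singleton_lt hΛ z.2⟩).mpr (Or.inl (singSem_V.mpr rfl))
      · exact (h ⟨_, rank_doub_lt hΛ z.2 a.2⟩).mpr (Or.inr (doubSem_V.mpr rfl))
  · intro h q
    rw [memRel_V, h]
    show q.val ∈ ({{z.val}, {z.val, a.val}} : ZFSet) ↔ _
    rw [ZFSet.mem_pair, singSem_V, doubSem_V]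

lemma pairMemSem_V (hΛ : Order.IsSuccLimit Λ) {z a r : ↥(Vclass Λ)} :
    PairMemSem z a r ↔ ZFSet.pair z.val a.val ∈ r.val := by
  constructor
  · rintro ⟨p, hpr, hp⟩
    rw [memRel_V] at hpr
    rwa [← (pairSem_V hΛ).mp hp]
  · intro h
    exact ⟨⟨ZFSet.pair z.val a.val, rank_kpair_lt hΛ z.2 a.2⟩, h, (pairSem_V hΛ).mpr rfl⟩

end VBridge

section RkV
variable {Λ : Ordinal.{u}}

/-- Extraction: the rank-bounding relation implies a true rank inequality. -/
lemma rkSem_rank_lt {x γ : ↥(Vclass Λ)} (h : RkSem x γ) :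
    x.val.rank < γ.val.rank := by
  obtain ⟨t, hxt, htrans, r, hc1, hc2, a, hpa, hay⟩ := h
  have key : ∀ zZ : ZFSet, ∀ hz : zZ ∈ Vclass Λ, zZ ∈ t.val →
      ∀ b : ↥(Vclass Λ), PairMemSem (X := ↥(Vclass Λ)) ⟨zZ, hz⟩ b r →
        zZ.rank ≤ b.val.rank := by
    intro zZ
    induction zZ using ZFSet.inductionOn with
    | h z IH =>
      intro hz hzt b hzb
      refine ZFSet.rank_le_iff.mpr ?_
      intro w hw
      have hwV : w ∈ Vclass Λ := mem_Vclass_of_mem hz hw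
      have hwt : w ∈ t.val := htrans ⟨z, hz⟩ ⟨w, hwV⟩ hzt hw
      obtain ⟨a', ha'⟩ := hc1 ⟨w, hwV⟩ hwt
      have h1 : w.rank ≤ a'.val.rank := IH w hw hwV hwt a' ha'
      have h2 : memRel a' b := hc2 ⟨z, hz⟩ ⟨w, hwV⟩ b a' hzt hw hzb ha'
      exact lt_of_le_of_lt h1 (ZFSet.rank_lt_of_mem ((memRel_V a' b).mp h2))
  have h1 : x.val.rank ≤ a.val.rank := key x.val x.2 hxt a hpa
  exact lt_of_le_of_lt h1 (ZFSet.rank_lt_of_mem ((memRel_V a γ).mp hay))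

/-- Construction: a set of smaller rank than an ordinal is `Rk`-related to it. -/
lemma rkSem_V_intro (hΛ : Order.IsSuccLimit Λ) (x y : ↥(Vclass Λ))
    (hyOrd : y.val.IsOrdinal) (hxy : x.val.rank < y.val.rank) : RkSem x y := by
  classical
  have hx : x.val.rank < Λ := x.2
  -- the transitive set t = V_{rank x + 1}
  have htV : Vz (Order.succ x.val.rank) ∈ Vclass Λ :=
    lt_of_le_of_lt (rank_Vz_le _) (hΛ.succ_lt hx)
  set tZ : ZFSet := Vz (Order.succ x.val.rank) with htZ
  -- the rank function r on t
  haveI : ZFSet.Definable₁ (fun z : ZFSet => ZFSet.pair z (ordZ z.rank)) :=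
    Classical.allZFSetDefinable _
  set rZ : ZFSet := ZFSet.image (fun z : ZFSet => ZFSet.pair z (ordZ z.rank)) tZ with hrZ
  have hmem_r : ∀ w : ZFSet, w ∈ rZ ↔ ∃ z ∈ tZ, ZFSet.pair z (ordZ z.rank) = w := by
    intro w; rw [hrZ, ZFSet.mem_image]
  have hrV : rZ ∈ Vclass Λ := by
    rw [mem_Vclass_iff]
    have hb : rZ.rank ≤ Order.succ (Order.succ tZ.rank) := by
      refine ZFSet.rank_le_iff.mpr ?_
      intro w hw
      obtain ⟨z, hzt, rfl⟩ := (hmem_r w).mp hw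
      have h1 : (ZFSet.pair z (ordZ z.rank)).rank =
          Order.succ (Order.succ z.rank) := by
        show (({{z}, {z, ordZ z.rank}} : ZFSet)).rank = _
        rw [ZFSet.rank_pair, ZFSet.rank_singleton, ZFSet.rank_pair, rank_ordZ,
          max_self, max_self]
      rw [h1]
      have : z.rank < tZ.rank := ZFSet.rank_lt_of_mem hzt
      exact Order.succ_lt_succ (Order.succ_lt_succ this)
    refine lt_of_le_of_lt hb ?_
    exact hΛ.succ_lt (hΛ.succ_lt htV)
  -- membership of z in t is equivalent to rank bound
  have hmem_t : ∀ z : ZFSet, z ∈ tZ ↔ z.rank ≤ x.val.rank := by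
    intro z; rw [htZ, mem_Vz, Order.lt_succ_iff]
  refine ⟨⟨tZ, htV⟩, ?_, ?_, ⟨rZ, hrV⟩, ?_, ?_, ?_⟩
  · exact (hmem_t x.val).mpr le_rfl
  · intro z w hzt hwz
    rw [memRel_V] at *
    rw [hmem_t] at hzt ⊢
    exact le_trans (ZFSet.rank_lt_of_mem hwz).le hzt
  · -- C1
    intro z hzt
    have haV : ordZ z.val.rank ∈ Vclass Λ := by
      rw [mem_Vclass_iff, rank_ordZ]; exact z.2
    refine ⟨⟨ordZ z.val.rank, haV⟩, (pairMemSem_V hΛ).mpr ?_⟩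
    exact (hmem_r _).mpr ⟨z.val, hzt, rfl⟩
  · -- C2
    intro z w b a hzt hwz hzb hwa
    have hzb' := (hmem_r _).mp ((pairMemSem_V hΛ).mp hzb)
    have hwa' := (hmem_r _).mp ((pairMemSem_V hΛ).mp hwa)
    obtain ⟨z', hz't, hz'⟩ := hzb'
    obtain ⟨w', hw't, hw'⟩ := hwa'
    obtain ⟨hz1, hz2⟩ := ZFSet.pair_injective hz'
    obtain ⟨hw1, hw2⟩ := ZFSet.pair_injective hw'
    rw [memRel_V, ← hz2, ← hw2, hz1, hw1]
    exact ordZ_mem_ordZ (ZFSet.rank_lt_of_mem hwz)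
  · -- the witness a = ordZ (rank x) ∈ y
    have haV : ordZ x.val.rank ∈ Vclass Λ := by
      rw [mem_Vclass_iff, rank_ordZ]; exact x.2
    refine ⟨⟨ordZ x.val.rank, haV⟩, (pairMemSem_V hΛ).mpr ?_, ?_⟩
    · exact (hmem_r _).mpr ⟨x.val, (hmem_t x.val).mpr le_rfl, rfl⟩
    · rw [memRel_V]
      show ordZ x.val.rank ∈ y.val
      rw [isOrdinal_eq_ordZ hyOrd]
      exact ordZ_mem_ordZ hxy

end RkV


/-- If `κ` is inaccessible, `φ` defines a transitive class `M` in `V_κ` whose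
ordinals are unbounded in `κ`, and `(N,F)` is a proper elementary end extension of `(V_κ,∈)`,
then the substructure of `(N,F)` defined by `φ` is a proper elementary end extension
of `(M,∈)`; in particular `(M,∈)` has a proper elementary end extension. -/
theorem definable_inner_model_has_eee
    (κ : Cardinal) (hκ : κ.IsInaccessible)
    (φ : LIn.Formula (Fin 1)) (M : Set ZFSet)
    (hMdef : M = {x : ZFSet | ∃ hx : x ∈ Vclass κ.ord,
        Formula.Realize φ (fun _ => (⟨x, hx⟩ : ↥(Vclass κ.ord)))})
    (hMsub : M ⊆ Vclass κ.ord)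
    (hMtrans : ∀ x ∈ M, ∀ y ∈ x, y ∈ M)
    (hMunbounded : ∀ β : Ordinal, β < κ.ord → ∃ x ∈ M, x.IsOrdinal ∧ β ≤ x.rank)
    {N : Type*} [LIn.Structure N] (j : ↥(Vclass κ.ord) → N)
    (hj : IsProperEEEmb j) :
    ∃ k : ↥M → ↥{b : N | Formula.Realize φ (fun _ => b)},
      (∀ x : ↥M, (k x : N) = j ⟨x.val, hMsub x.property⟩) ∧ IsProperEEEmb k := by
  classical
  obtain ⟨hjinj, hjelem, hjend, hjnsurj⟩ := hj
  have hlim : Order.IsSuccLimit (κ.ord) := Cardinal.isSuccLimit_ord hκ.1.le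
  set S : Set N := {b : N | Formula.Realize φ (fun _ => b)} with hS
  let incl : ↥M → ↥(Vclass κ.ord) := fun m => ⟨m.val, hMsub m.property⟩
  have hM_iff : ∀ a : ↥(Vclass κ.ord), a.val ∈ M ↔ Formula.Realize φ (fun _ => a) := by
    intro a
    rw [hMdef]
    constructor
    · rintro ⟨hx, h⟩
      exact h
    · intro h
      exact ⟨a.property, h⟩
  have hks : ∀ x : ↥M, Formula.Realize φ (fun _ => j (incl x)) := by
    intro x
    have h1 : Formula.Realize φ (fun _ => incl x) := (hM_iff (incl x)).mp x.property
    exact (hjelem 1 φ (fun _ => incl x)).mpr h1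
  have hinclinj : Function.Injective incl := by
    intro a b h
    exact Subtype.ext (congrArg (Subtype.val : ↥(Vclass κ.ord) → ZFSet) h)
  have hrangeS : ∀ b : N, b ∈ Set.range (Subtype.val : ↥S → N) ↔
      Formula.Realize φ (fun _ => b) := by
    intro b
    rw [Subtype.range_coe]
    exact Iff.rfl
  have hrangeV : ∀ a : ↥(Vclass κ.ord), a ∈ Set.range incl ↔
      Formula.Realize φ (fun _ => a) := by
    intro a
    rw [← hM_iff]
    constructor
    · rintro ⟨m, rfl⟩
      exact m.property
    · intro h
      exact ⟨⟨a.val, h⟩, rfl⟩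
  refine ⟨fun x => ⟨j (incl x), hks x⟩, fun x => rfl, ?_, ?_, ?_, ?_⟩
  · -- injectivity
    intro a b hab
    have h1 : j (incl a) = j (incl b) := congrArg Subtype.val hab
    exact hinclinj (hjinj h1)
  · -- elementarity
    intro n ψ v
    have L1 := realize_relativize (Subtype.val : ↥S → N) Subtype.val_injective
      (fun x y => Iff.rfl) φ hrangeS ψ
      ((fun x => (⟨j (incl x), hks x⟩ : ↥S)) ∘ v) default
    have L2 := realize_relativize incl hinclinj (fun x y => Iff.rfl) φ hrangeV ψ v default
    have hc1 : (Subtype.val ∘ ((fun x => (⟨j (incl x), hks x⟩ : ↥S)) ∘ v) : Fin n → N)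
        = j ∘ (incl ∘ v) := rfl
    have hc0 : (Subtype.val ∘ (default : Fin 0 → ↥S) : Fin 0 → N) = default :=
      Subsingleton.elim _ _
    have hc0' : (incl ∘ (default : Fin 0 → ↥M) : Fin 0 → ↥(Vclass κ.ord)) = default :=
      Subsingleton.elim _ _
    rw [hc1, hc0] at L1
    rw [hc0'] at L2
    have e2 := hjelem n (relativize φ ψ) (incl ∘ v)
    exact L1.symm.trans (e2.trans L2)
  · -- endness
    intro a b hb
    have hb' : memRel (b.val) (j (incl a)) := hb
    obtain ⟨c, hc⟩ := hjend (incl a) b.val hb'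
    have hbφ : Formula.Realize φ (fun _ => b.val) := b.property
    rw [← hc] at hbφ
    have hcφ : Formula.Realize φ (fun _ => c) := (hjelem 1 φ (fun _ => c)).mp hbφ
    have hcM : c.val ∈ M := (hM_iff c).mpr hcφ
    refine ⟨⟨c.val, hcM⟩, ?_⟩
    apply Subtype.ext
    show j (incl ⟨c.val, hcM⟩) = b.val
    have : incl ⟨c.val, hcM⟩ = c := rfl
    rw [this, hc]
  · -- properness
    intro hsurj
    obtain ⟨b₀, hb₀⟩ : ∃ b : N, b ∉ Set.range j := by
      by_contra h
      push_neg at h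
      exact hjnsurj fun b => h b
    -- V_κ satisfies σ
    have hVσ : Formula.Realize (sigmaF φ) (default : Fin 0 → ↥(Vclass κ.ord)) := by
      rw [realize_sigmaF]
      intro x
      obtain ⟨yZ, hyM, hyOrd, hyRank⟩ :=
        hMunbounded (Order.succ x.val.rank) (hlim.succ_lt x.2)
      refine ⟨⟨yZ, hMsub hyM⟩, (hM_iff ⟨yZ, hMsub hyM⟩).mp hyM, ?_⟩
      exact rkSem_V_intro hlim x ⟨yZ, hMsub hyM⟩ hyOrd (Order.succ_le_iff.mp hyRank)
    have hNσ : Formula.Realize (sigmaF φ)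
        (j ∘ (default : Fin 0 → ↥(Vclass κ.ord))) :=
      (hjelem 0 (sigmaF φ) default).mpr hVσ
    obtain ⟨y₀, hy₀φ, hy₀rk⟩ := (realize_sigmaF φ _).mp hNσ b₀
    -- y₀ is in the range of j, via surjectivity of k
    obtain ⟨m₀, hm₀⟩ := hsurj ⟨y₀, hy₀φ⟩
    have hjγ : j (incl m₀) = y₀ := congrArg Subtype.val hm₀
    -- the level W = V_{rank γ}
    have hWV : Vz (m₀.val.rank) ∈ Vclass κ.ord :=
      lt_of_le_of_lt (rank_Vz_le _) (hMsub m₀.property)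
    set γ : ↥(Vclass κ.ord) := incl m₀ with hγ
    set W : ↥(Vclass κ.ord) := ⟨Vz (m₀.val.rank), hWV⟩ with hW
    -- V_κ satisfies ψ(γ, W)
    have hVψ : Formula.Realize psiF (![γ, W] : Fin 2 → ↥(Vclass κ.ord)) := by
      rw [realize_psiF]
      intro x hx
      show x.val ∈ W.val
      have h1 : x.val.rank < γ.val.rank := rkSem_rank_lt (by simpa using hx)
      show x.val ∈ Vz (m₀.val.rank)
      exact mem_Vz.mpr h1
    have hNψ : Formula.Realize psiF (j ∘ (![γ, W] : Fin 2 → ↥(Vclass κ.ord))) :=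
      (hjelem 2 psiF ![γ, W]).mpr hVψ
    have hstep := (realize_psiF _).mp hNψ b₀
    have hrkb : RkSem b₀ ((j ∘ (![γ, W] : Fin 2 → ↥(Vclass κ.ord))) 0) := by
      have e : (j ∘ (![γ, W] : Fin 2 → ↥(Vclass κ.ord))) 0 = y₀ := by
        show j γ = y₀
        exact hjγ
      rw [e]
      exact hy₀rk
    have hmemW : memRel b₀ ((j ∘ (![γ, W] : Fin 2 → ↥(Vclass κ.ord))) 1) := hstep hrkb
    have hmemW' : memRel b₀ (j W) := hmemW
    exact hb₀ (hjend W b₀ hmemW')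
end

section
/- Let κ be an inaccessible cardinal and N a transitive set such that (N,∈) is a proper elementary end extension of (V_κ,∈). Then κ ∈ N and (N,∈) satisfies 'κ is an inaccessible cardinal', i.e., N thinks κ is an uncountable regular strong limit cardinal. -/
open FirstOrder Language

/-- `(B,∈)` is a proper elementary end extension of `(A,∈)` (both with true membership):
`A ⊆ B`, `A ≠ B`, no element of `A` gains new members, and the inclusion is elementary. -/
def IsProperEEESets (A B : Set ZFSet) : Prop :=
  ∃ h : A ⊆ B, A ≠ B ∧
    (∀ a ∈ A, ∀ b ∈ B, b ∈ a → b ∈ A) ∧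
    ∀ (n : ℕ) (φ : LIn.Formula (Fin n)) (v : Fin n → A),
      Formula.Realize φ (Set.inclusion h ∘ v) ↔ Formula.Realize φ v

/-- The transitive set `N` satisfies "`κ` is a regular cardinal": `κ` is an infinite limit
ordinal and every function (lying in `N`) from a smaller ordinal into `κ` has bounded range.
(These notions are absolute for transitive sets, so this is the relativization to `N`.) -/
def SatisfiesRegularCardinal (N κ : ZFSet) : Prop :=
  κ.IsOrdinal ∧ (ZFSet.omega ∈ κ ∨ ZFSet.omega = κ) ∧ (∀ x ∈ κ, insert x x ∈ κ) ∧
    ∀ f ∈ N, ∀ α ∈ κ, ZFSet.IsFunc α κ f →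
      ∃ β ∈ κ, ∀ a ∈ α, ∀ y : ZFSet, ZFSet.pair a y ∈ f → y ∈ β ∨ y = β

/-- The transitive set `N` satisfies "`κ` is a strong limit": for every `α < κ` there is a
`β < κ` and a map in `N` whose domain is contained in `β` and which covers all subsets of `α`
lying in `N` (i.e. `N ⊨ 2^α ≤ β`). -/
def SatisfiesStrongLimit (N κ : ZFSet) : Prop :=
  ∀ α ∈ κ, ∃ β ∈ κ, ∃ f ∈ N,
    (∀ p ∈ f, ∃ γ y : ZFSet, γ ∈ β ∧ p = ZFSet.pair γ y) ∧
    ∀ x ∈ N, x ⊆ α → ∃ γ ∈ β, ZFSet.pair γ x ∈ f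

/-! ### Auxiliary development: von Neumann ordinals as `ZFSet`s -/

universe u

open Ordinal in
/-- The von Neumann ordinal associated to an ordinal. -/
noncomputable def ordToZF : Ordinal.{u} → ZFSet.{u} :=
  lt_wf.fix fun o ih => ZFSet.range fun i : o.ToType =>
    ih ((ToType.mk (o := o)).symm i) ((ToType.mk (o := o)).symm i).2

open Ordinal in
theorem ordToZF_def (o : Ordinal.{u}) :
    ordToZF o = ZFSet.range fun i : o.ToType => ordToZF ((ToType.mk (o := o)).symm i) :=
  lt_wf.fix_eq _ o

open Ordinal in
theorem mem_ordToZF {z : ZFSet.{u}} {o : Ordinal.{u}} :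
    z ∈ ordToZF o ↔ ∃ a < o, z = ordToZF a := by
  rw [ordToZF_def, ZFSet.mem_range]
  constructor
  · rintro ⟨i, rfl⟩; exact ⟨_, ((ToType.mk (o := o)).symm i).2, rfl⟩
  · rintro ⟨a, ha, rfl⟩
    exact ⟨ToType.mk (o := o) ⟨a, ha⟩, by simp⟩

@[simp] theorem rank_ordToZF (o : Ordinal.{u}) : (ordToZF o).rank = o := by
  induction o using Ordinal.lt_wf.induction with
  | _ o ih =>
    apply le_antisymm
    · rw [ZFSet.rank_le_iff]
      rintro z hz
      obtain ⟨a, ha, rfl⟩ := mem_ordToZF.1 hz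
      rwa [ih a ha]
    · refine le_of_forall_lt fun a ha => ?_
      have : ordToZF a ∈ ordToZF o := mem_ordToZF.2 ⟨a, ha, rfl⟩
      simpa [ih a ha] using ZFSet.rank_lt_of_mem this

@[simp] theorem ordToZF_mem_ordToZF {a b : Ordinal.{u}} :
    ordToZF a ∈ ordToZF b ↔ a < b := by
  constructor
  · intro h; simpa using ZFSet.rank_lt_of_mem h
  · intro h; exact mem_ordToZF.2 ⟨a, h, rfl⟩

theorem isOrdinal_ordToZF (o : Ordinal.{u}) : (ordToZF o).IsOrdinal := by
  constructor
  · intro z hz w hw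
    obtain ⟨a, ha, rfl⟩ := mem_ordToZF.1 hz
    obtain ⟨b, hb, rfl⟩ := mem_ordToZF.1 hw
    exact mem_ordToZF.2 ⟨b, hb.trans ha, rfl⟩
  · intro y z w hyz hzw hwo
    obtain ⟨c, _, rfl⟩ := mem_ordToZF.1 hwo
    obtain ⟨b, hb, rfl⟩ := mem_ordToZF.1 hzw
    obtain ⟨a, ha, rfl⟩ := mem_ordToZF.1 hyz
    exact mem_ordToZF.2 ⟨a, ha.trans hb, rfl⟩

/-- Every von Neumann ordinal is `ordToZF` of its rank. -/
theorem eq_ordToZF_of_isOrdinal {x : ZFSet.{u}} (h : x.IsOrdinal) : x = ordToZF x.rank := by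
  induction x using ZFSet.inductionOn with
  | _ x ih =>
    have hmem : ∀ y ∈ x, ZFSet.IsOrdinal y := by
      intro y hy
      constructor
      · intro a ha b hb
        exact h.mem_trans' hb ha hy
      · intro a b c hab hbc hcy
        exact h.mem_trans' hab hbc (h.isTransitive.mem_trans hcy hy)
    ext z
    rw [mem_ordToZF]
    constructor
    · intro hz
      exact ⟨z.rank, ZFSet.rank_lt_of_mem hz, ih z hz (hmem z hz)⟩
    · rintro ⟨a, ha, rfl⟩
      obtain ⟨y, hy, hay⟩ := ZFSet.lt_rank_iff.1 ha
      have hyo := ih y hy (hmem y hy)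
      rcases eq_or_lt_of_le hay with rfl | hlt
      · rwa [← hyo]
      · have : ordToZF a ∈ y := by rw [hyo]; exact ordToZF_mem_ordToZF.2 hlt
        exact h.isTransitive.mem_trans this hy

theorem ordToZF_zero : ordToZF.{u} 0 = ∅ := by
  ext z
  simp [mem_ordToZF, ZFSet.notMem_empty, not_lt_zero]

theorem ordToZF_succ (a : Ordinal.{u}) :
    ordToZF (a + 1) = insert (ordToZF a) (ordToZF a) := by
  ext z
  rw [mem_ordToZF, ZFSet.mem_insert_iff, mem_ordToZF]
  constructor
  · rintro ⟨b, hb, rfl⟩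
    rcases lt_or_eq_of_le (Order.lt_add_one_iff.1 hb) with h | rfl
    · exact Or.inr ⟨b, h, rfl⟩
    · exact Or.inl rfl
  · rintro (rfl | ⟨b, hb, rfl⟩)
    · exact ⟨a, lt_add_one a, rfl⟩
    · exact ⟨b, hb.trans (lt_add_one a), rfl⟩

/-- The `n`-th von Neumann natural. -/
noncomputable def natZF (n : ℕ) : ZFSet.{u} := ZFSet.mk (PSet.ofNat n)

theorem natZF_eq (n : ℕ) : natZF.{u} n = ordToZF (n : Ordinal.{u}) := by
  induction n with
  | zero => exact ordToZF_zero.symm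
  | succ n ih =>
    have h : natZF.{u} (n+1) = insert (natZF n) (natZF n) := rfl
    rw [h, ih, ← ordToZF_succ]
    norm_cast

theorem mem_omega_iff {z : ZFSet.{u}} : z ∈ ZFSet.omega ↔ ∃ n : ℕ, z = natZF n := by
  constructor
  · intro h
    induction z using Quotient.inductionOn with
    | _ x => obtain ⟨⟨n⟩, h⟩ := h; exact ⟨n, ZFSet.sound h⟩
  · rintro ⟨n, rfl⟩
    induction n with
    | zero => exact ZFSet.omega_zero
    | succ n ih => exact ZFSet.omega_succ ih

theorem omega_eq_ordToZF : ZFSet.omega.{u} = ordToZF Ordinal.omega0 := by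
  ext z
  rw [mem_omega_iff, mem_ordToZF]
  constructor
  · rintro ⟨n, rfl⟩
    exact ⟨n, Ordinal.nat_lt_omega0 n, natZF_eq n⟩
  · rintro ⟨a, ha, rfl⟩
    obtain ⟨n, rfl⟩ := Ordinal.lt_omega0.1 ha
    exact ⟨n, (natZF_eq n).symm⟩

theorem add_nat_lt_of_limit {o r : Ordinal.{u}} (ho : Order.IsSuccLimit o) (hr : r < o) (n : ℕ) :
    r + n < o := by
  induction n with
  | zero => simpa using hr
  | succ n ih =>
    have : r + (n + 1 : ℕ) = (r + n) + 1 := by push_cast; rw [add_assoc]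
    rw [this, Ordinal.add_one_eq_succ]
    exact ho.succ_lt ih

theorem rank_pair_le {a b : ZFSet.{u}} {o : Ordinal.{u}}
    (ha : a.rank ≤ o) (hb : b.rank ≤ o) : (ZFSet.pair a b).rank ≤ o + 1 + 1 := by
  have h1 : ({a} : ZFSet).rank ≤ o + 1 := by
    rw [ZFSet.rank_singleton, ← Ordinal.add_one_eq_succ]
    exact add_le_add_left ha 1
  have h2 : ({a, b} : ZFSet).rank ≤ o + 1 := by
    rw [ZFSet.rank_pair, ← Ordinal.add_one_eq_succ, ← Ordinal.add_one_eq_succ]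
    exact max_le (add_le_add_left ha 1) (add_le_add_left hb 1)
  rw [ZFSet.pair, ZFSet.rank_pair, ← Ordinal.add_one_eq_succ, ← Ordinal.add_one_eq_succ]
  exact max_le (add_le_add_left h1 1) (add_le_add_left h2 1)

/-! ### Transitive closure -/

instance smallToSet (x : ZFSet.{u}) : Small.{u} x.toSet := ZFSet.small_coe x

noncomputable def tcl (x : ZFSet.{u}) : ZFSet.{u} :=
  x ∪ ZFSet.sUnion (ZFSet.range fun y : Shrink.{u} x.toSet => tcl ((equivShrink x.toSet).symm y).1)
termination_by x
decreasing_by exact ((equivShrink x.toSet).symm y).2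

theorem mem_tcl {z x : ZFSet.{u}} : z ∈ tcl x ↔ z ∈ x ∨ ∃ y ∈ x, z ∈ tcl y := by
  rw [tcl, ZFSet.mem_union, ZFSet.mem_sUnion]
  apply or_congr_right
  constructor
  · rintro ⟨w, hw, hz⟩
    obtain ⟨i, rfl⟩ := ZFSet.mem_range.1 hw
    exact ⟨_, ((equivShrink x.toSet).symm i).2, hz⟩
  · rintro ⟨y, hy, hz⟩
    refine ⟨tcl y, ZFSet.mem_range.2 ⟨equivShrink x.toSet ⟨y, hy⟩, ?_⟩, hz⟩
    simp

theorem subset_tcl {x : ZFSet.{u}} : x ⊆ tcl x := fun _ hz => mem_tcl.2 (Or.inl hz)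

theorem tcl_transitive (x : ZFSet.{u}) : ∀ z ∈ tcl x, ∀ w ∈ z, w ∈ tcl x := by
  induction x using ZFSet.inductionOn with
  | _ x ih =>
    intro z hz w hw
    rcases mem_tcl.1 hz with hzx | ⟨y, hy, hzy⟩
    · exact mem_tcl.2 (Or.inr ⟨z, hzx, subset_tcl hw⟩)
    · exact mem_tcl.2 (Or.inr ⟨y, hy, ih y hy z hzy w hw⟩)

theorem rank_lt_of_mem_tcl {x z : ZFSet.{u}} (hz : z ∈ tcl x) : z.rank < x.rank := by
  induction x using ZFSet.inductionOn generalizing z with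
  | _ x ih =>
    rcases mem_tcl.1 hz with hzx | ⟨y, hy, hzy⟩
    · exact ZFSet.rank_lt_of_mem hzx
    · exact (ih y hy hzy).trans (ZFSet.rank_lt_of_mem hy)

/-- A real set that is transitive and whose members are pairwise `∈`-comparable is a
von Neumann ordinal. -/
theorem isOrdinal_of_trichotomy {y : ZFSet.{u}}
    (h1 : ∀ a ∈ y, ∀ b ∈ a, b ∈ y)
    (h2 : ∀ a ∈ y, ∀ b ∈ y, a ∈ b ∨ a = b ∨ b ∈ a) : y.IsOrdinal := by
  constructor
  · exact fun a ha b hb => h1 a ha b hb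
  · intro a b c hab hbc hcy
    have hby : b ∈ y := h1 c hcy b hbc
    have hay : a ∈ y := h1 b hby a hab
    rcases h2 a hay c hcy with h | rfl | h
    · exact h
    · exact absurd (ZFSet.rank_lt_of_mem hbc) (lt_asymm (ZFSet.rank_lt_of_mem hab))
    · exact absurd ((ZFSet.rank_lt_of_mem hab).trans (ZFSet.rank_lt_of_mem hbc))
        (lt_asymm (ZFSet.rank_lt_of_mem h))

/-! ### First-order formulas -/

/-- atomic membership formula between de Bruijn variables -/
def mem' {n : ℕ} (i j : Fin n) : LIn.BoundedFormula (Fin 0) n :=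
  Relations.boundedFormula₂ memSymb (Term.var (Sum.inr i)) (Term.var (Sum.inr j))

def eq' {n : ℕ} (i j : Fin n) : LIn.BoundedFormula (Fin 0) n :=
  Term.bdEqual (Term.var (Sum.inr i)) (Term.var (Sum.inr j))

@[simp] lemma memStructure_relMap (A : Set ZFSet) (v : Fin 2 → A) :
    Structure.RelMap (L := LIn) (M := A) memSymb v ↔ (v 0).val ∈ (v 1).val := Iff.rfl

@[simp] lemma realize_mem' {A : Set ZFSet} {n} {i j : Fin n} {v : Fin 0 → A} {xs : Fin n → A} :
    (mem' i j).Realize v xs ↔ (xs i).val ∈ (xs j).val := by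
  simp [mem', Relations.boundedFormula₂, BoundedFormula.realize_rel₂]

@[simp] lemma realize_eq' {A : Set ZFSet} {n} {i j : Fin n} {v : Fin 0 → A} {xs : Fin n → A} :
    (eq' i j).Realize v xs ↔ (xs i).val = (xs j).val := by
  rw [eq', BoundedFormula.realize_bdEqual]; simp [Subtype.ext_iff]

/-- "(w,v) is linked by f": a Δ₀ approximation of `pair w v ∈ f`. -/
def pmF {n : ℕ} (w v f : Fin n) : LIn.BoundedFormula (Fin 0) n :=
  ∃' ((mem' (Fin.last n) f.castSucc) ⊓
    ((∀' (mem' (Fin.last (n+1)) (Fin.last n).castSucc ⟹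
        ((mem' w.castSucc.castSucc (Fin.last (n+1))) ⊓
         ∀' (mem' (Fin.last (n+2)) (Fin.last (n+1)).castSucc ⟹
             (eq' (Fin.last (n+2)) w.castSucc.castSucc.castSucc ⊔
              eq' (Fin.last (n+2)) v.castSucc.castSucc.castSucc))))) ⊓
      ∃' ((mem' (Fin.last (n+1)) (Fin.last n).castSucc) ⊓
          (mem' v.castSucc.castSucc (Fin.last (n+1))))))

/-- Semantic counterpart of `pmF`. -/
def pmProp (A : Set ZFSet) (w v f : ZFSet) : Prop :=
  ∃ p ∈ f, (∀ q ∈ A, q ∈ p → w ∈ q ∧ ∀ e ∈ A, e ∈ q → e = w ∨ e = v) ∧ p ∈ A ∧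
    ∃ q ∈ p, q ∈ A ∧ v ∈ q

@[simp] lemma realize_pmF {A : Set ZFSet} {n} {w v f : Fin n} {vv : Fin 0 → A} {xs : Fin n → A} :
    (pmF w v f).Realize vv xs ↔ pmProp A (xs w).val (xs v).val (xs f).val := by
  simp [pmF, pmProp, Fin.snoc_castSucc, Fin.snoc_last]

/-- The key sentence: every set `x` is a member of a transitive set `t` that carries an
ordinal-bounded rank-like function (coded by `f`, with bounds inside the "ordinal" `y`). -/
def rankΦ : LIn.Formula (Fin 0) :=
  ∀' ∃' ∃' ∃' (
    (mem' (0 : Fin 4) (1 : Fin 4)) ⊓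
    ((∀' (mem' (4 : Fin 5) (1 : Fin 5) ⟹ ∀' (mem' (5 : Fin 6) (4 : Fin 6) ⟹ mem' (5 : Fin 6) (1 : Fin 6)))) ⊓
    (((∀' (mem' (4 : Fin 5) (2 : Fin 5) ⟹ ∀' (mem' (5 : Fin 6) (4 : Fin 6) ⟹ mem' (5 : Fin 6) (2 : Fin 6)))) ⊓
      (∀' (mem' (4 : Fin 5) (2 : Fin 5) ⟹ ∀' (mem' (5 : Fin 6) (2 : Fin 6) ⟹
        (mem' (4 : Fin 6) (5 : Fin 6) ⊔ (eq' (4 : Fin 6) (5 : Fin 6) ⊔ mem' (5 : Fin 6) (4 : Fin 6))))))) ⊓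
    ((∀' (mem' (4 : Fin 5) (1 : Fin 5) ⟹ ∃' ((mem' (5 : Fin 6) (2 : Fin 6)) ⊓ pmF (4 : Fin 6) (5 : Fin 6) (3 : Fin 6)))) ⊓
     (∀' (mem' (4 : Fin 5) (1 : Fin 5) ⟹ ∀' (mem' (5 : Fin 6) (4 : Fin 6) ⟹
        ∀' (∀' (pmF (4 : Fin 8) (6 : Fin 8) (3 : Fin 8) ⟹
              (pmF (5 : Fin 8) (7 : Fin 8) (3 : Fin 8) ⟹ mem' (7 : Fin 8) (6 : Fin 8)))))))))))

/-- Semantic counterpart of `rankΦ`. -/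
def rankΦProp (A : Set ZFSet) : Prop :=
  ∀ x ∈ A, ∃ t,
    x ∈ t ∧
    (∀ w ∈ A, w ∈ t → ∀ u ∈ A, u ∈ w → u ∈ t) ∧
    t ∈ A ∧
    ∃ y,
      ((∀ a ∈ A, a ∈ y → ∀ b ∈ A, b ∈ a → b ∈ y) ∧
       ∀ a ∈ A, a ∈ y → ∀ b ∈ A, b ∈ y → a ∈ b ∨ a = b ∨ b ∈ a) ∧
      y ∈ A ∧
      ∃ f,
        (∀ w ∈ A, w ∈ t → ∃ v ∈ y, v ∈ A ∧ pmProp A w v f) ∧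
        f ∈ A ∧
        ∀ w ∈ A, w ∈ t → ∀ u ∈ A, u ∈ w →
          ∀ v ∈ A, ∀ v' ∈ A, pmProp A w v f → pmProp A u v' f → v' ∈ v

lemma realize_rankΦ {A : Set ZFSet} (vv : Fin 0 → A) :
    Formula.Realize rankΦ vv ↔ rankΦProp A := by
  simp (config := { decide := true }) [rankΦ, rankΦProp, Formula.Realize, Fin.snoc]

@[simp] lemma mem_Vclass {z : ZFSet} {o : Ordinal} : z ∈ Vclass o ↔ z.rank < o := Iff.rfl

lemma succ_lt_of_limit {o a : Ordinal.{u}} (ho : Order.IsSuccLimit o) (h : a < o) : a + 1 < o := by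
  rw [Ordinal.add_one_eq_succ]; exact ho.succ_lt h

/-- Introducing `pmProp` from a genuine pair membership, for a downward-closed class. -/
lemma pmProp_pair {A : Set ZFSet} (hA : ∀ p ∈ A, ∀ q ∈ p, q ∈ A) {w v f : ZFSet}
    (hwv : ZFSet.pair w v ∈ f) (hpA : ZFSet.pair w v ∈ A) : pmProp A w v f := by
  have hpair : ∀ q : ZFSet, q ∈ ZFSet.pair w v ↔ q = {w} ∨ q = {w, v} := fun q => ZFSet.mem_pair
  refine ⟨ZFSet.pair w v, hwv, ?_, hpA, {w, v}, (hpair _).2 (Or.inr rfl), hA _ hpA _ ((hpair _).2 (Or.inr rfl)), ZFSet.mem_pair.2 (Or.inr rfl)⟩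
  intro q _ hq
  rcases (hpair q).1 hq with rfl | rfl
  · exact ⟨ZFSet.mem_singleton.2 rfl, fun e _ he => Or.inl (ZFSet.mem_singleton.1 he)⟩
  · exact ⟨ZFSet.mem_pair.2 (Or.inl rfl), fun e _ he => ZFSet.mem_pair.1 he⟩

/-- Extracting the value from `pmProp` when `f` consists of rank-coding pairs. -/
lemma pmProp_extract {A : Set ZFSet} (hA : ∀ p ∈ A, ∀ q ∈ p, q ∈ A) {f w v : ZFSet}
    (hf : ∀ p ∈ f, ∃ w₀ : ZFSet, p = ZFSet.pair w₀ (ordToZF w₀.rank))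
    (h : pmProp A w v f) : v = ordToZF w.rank := by
  obtain ⟨p, hpf, hq, hpA, q0, hq0p, _, hvq0⟩ := h
  obtain ⟨w₀, rfl⟩ := hf p hpf
  set r₀ := ordToZF w₀.rank with hr₀
  have h1A : ({w₀} : ZFSet) ∈ A := hA _ hpA _ (ZFSet.mem_pair.2 (Or.inl rfl))
  have h2A : ({w₀, r₀} : ZFSet) ∈ A := hA _ hpA _ (ZFSet.mem_pair.2 (Or.inr rfl))
  -- w = w₀
  obtain ⟨hw1, _⟩ := hq _ h1A (ZFSet.mem_pair.2 (Or.inl rfl))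
  have hww : w = w₀ := ZFSet.mem_singleton.1 hw1
  subst hww
  -- v ∈ {w, r₀}
  have hv : v = w ∨ v = r₀ := by
    rcases ZFSet.mem_pair.1 hq0p with rfl | rfl
    · exact Or.inl (ZFSet.mem_singleton.1 hvq0)
    · exact ZFSet.mem_pair.1 hvq0
  rcases hv with rfl | rfl
  · -- v = w ; show r₀ = w as well
    obtain ⟨_, he⟩ := hq _ h2A (ZFSet.mem_pair.2 (Or.inr rfl))
    have hr0A : r₀ ∈ A := hA _ h2A _ (ZFSet.mem_pair.2 (Or.inr rfl))
    rcases he r₀ hr0A (ZFSet.mem_pair.2 (Or.inr rfl)) with h' | h' <;> exact h'.symm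
  · rfl

/-- `V_o` realizes the rank sentence, for limit `o`. -/
theorem rankΦProp_Vclass {o : Ordinal.{u}} (ho : Order.IsSuccLimit o) : rankΦProp (Vclass o) := by
  have hdown : ∀ p ∈ Vclass o, ∀ q ∈ p, q ∈ Vclass o := fun p hp q hq =>
    mem_Vclass.2 ((ZFSet.rank_lt_of_mem hq).trans (mem_Vclass.1 hp))
  intro x hx
  have hxr : x.rank < o := hx
  set t := insert x (tcl x) with ht
  have hmem_t : ∀ z : ZFSet, z ∈ t ↔ z = x ∨ z ∈ tcl x := fun z => ZFSet.mem_insert_iff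
  have htrank : ∀ z ∈ t, z.rank ≤ x.rank := by
    intro z hz
    rcases (hmem_t z).1 hz with rfl | hz'
    · exact le_rfl
    · exact (rank_lt_of_mem_tcl hz').le
  have httrans : ∀ z ∈ t, ∀ w ∈ z, w ∈ t := by
    intro z hz w hw
    rcases (hmem_t z).1 hz with rfl | hz'
    · exact (hmem_t w).2 (Or.inr (subset_tcl hw))
    · exact (hmem_t w).2 (Or.inr (tcl_transitive x z hz' w hw))
  have htV : t ∈ Vclass o := by
    rw [mem_Vclass, ht, ZFSet.rank_insert]
    apply max_lt
    · rw [← Ordinal.add_one_eq_succ]; exact succ_lt_of_limit ho hxr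
    · exact lt_of_le_of_lt (ZFSet.rank_le_iff.2 fun z hz => rank_lt_of_mem_tcl hz) hxr
  set y := ordToZF (x.rank + 1) with hy
  have hyV : y ∈ Vclass o := by
    rw [mem_Vclass, hy, rank_ordToZF]; exact succ_lt_of_limit ho hxr
  set F := ZFSet.range (fun w : Shrink.{u} t.toSet =>
    ZFSet.pair ((equivShrink t.toSet).symm w).1 (ordToZF ((equivShrink t.toSet).symm w).1.rank)) with hF
  have hmemF : ∀ p : ZFSet, p ∈ F ↔ ∃ w ∈ t, p = ZFSet.pair w (ordToZF w.rank) := by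
    intro p
    rw [hF, ZFSet.mem_range]
    constructor
    · rintro ⟨i, rfl⟩; exact ⟨_, ((equivShrink t.toSet).symm i).2, rfl⟩
    · rintro ⟨w, hw, rfl⟩
      exact ⟨equivShrink t.toSet ⟨w, hw⟩, by simp⟩
  have hpair_rank : ∀ w ∈ t, (ZFSet.pair w (ordToZF w.rank)).rank < o := by
    intro w hw
    have h1 : w.rank ≤ x.rank := htrank w hw
    have h2 : (ordToZF w.rank).rank ≤ x.rank := by rw [rank_ordToZF]; exact h1
    exact lt_of_le_of_lt (rank_pair_le h1 h2)
      (succ_lt_of_limit ho (succ_lt_of_limit ho hxr))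
  have hFV : F ∈ Vclass o := by
    rw [mem_Vclass]
    have : F.rank ≤ x.rank + 1 + 1 + 1 := by
      rw [ZFSet.rank_le_iff]
      intro p hp
      obtain ⟨w, hw, rfl⟩ := (hmemF p).1 hp
      have h1 : w.rank ≤ x.rank := htrank w hw
      have h2 : (ordToZF w.rank).rank ≤ x.rank := by rw [rank_ordToZF]; exact h1
      calc (ZFSet.pair w (ordToZF w.rank)).rank ≤ x.rank + 1 + 1 := rank_pair_le h1 h2
        _ < x.rank + 1 + 1 + 1 := lt_add_one _
    exact lt_of_le_of_lt this
      (succ_lt_of_limit ho (succ_lt_of_limit ho (succ_lt_of_limit ho hxr)))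
  have hfcode : ∀ p ∈ F, ∃ w₀ : ZFSet, p = ZFSet.pair w₀ (ordToZF w₀.rank) := by
    intro p hp
    obtain ⟨w, _, rfl⟩ := (hmemF p).1 hp
    exact ⟨w, rfl⟩
  refine ⟨t, (hmem_t x).2 (Or.inl rfl), fun w _ hw u _ hu => httrans w hw u hu, htV,
    y, ⟨?_, ?_⟩, hyV, F, ?_, hFV, ?_⟩
  · -- y transitive
    intro a _ ha b _ hb
    exact (isOrdinal_ordToZF _).isTransitive.mem_trans hb ha
  · -- y trichotomous
    intro a _ ha b _ hb
    rw [hy] at ha hb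
    obtain ⟨c, _, rfl⟩ := mem_ordToZF.1 ha
    obtain ⟨d, _, rfl⟩ := mem_ordToZF.1 hb
    rcases lt_trichotomy c d with h | h | h
    · exact Or.inl (ordToZF_mem_ordToZF.2 h)
    · exact Or.inr (Or.inl (by rw [h]))
    · exact Or.inr (Or.inr (ordToZF_mem_ordToZF.2 h))
  · -- C4
    intro w _ hw
    refine ⟨ordToZF w.rank, ?_, ?_, ?_⟩
    · rw [hy]
      refine ordToZF_mem_ordToZF.2 ?_
      exact lt_of_le_of_lt (htrank w hw) (lt_add_one _)
    · rw [mem_Vclass, rank_ordToZF]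
      exact lt_of_le_of_lt (htrank w hw) hxr
    · exact pmProp_pair hdown ((hmemF _).2 ⟨w, hw, rfl⟩)
        (mem_Vclass.2 (hpair_rank w hw))
  · -- C5
    intro w _ _ u _ hu v _ v' _ hpm hpm'
    rw [pmProp_extract hdown hfcode hpm, pmProp_extract hdown hfcode hpm']
    exact ordToZF_mem_ordToZF.2 (ZFSet.rank_lt_of_mem hu)

/-- Auxiliary construction for the strong limit clause. -/
theorem strongLimit_aux {o : Ordinal.{u}} (ho : Order.IsSuccLimit o) {α : ZFSet.{u}} (hαr : α.rank < o) :
    ∃ f : ZFSet.{u}, f.rank < o ∧ (∀ p ∈ f, ∃ y : ZFSet, p = ZFSet.pair ∅ y) ∧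
      ∀ x : ZFSet.{u}, x ⊆ α → ZFSet.pair ∅ x ∈ f := by
  set P := ZFSet.powerset α with hP
  set f := ZFSet.range (fun tt : Shrink.{u} P.toSet => ZFSet.pair ∅ ((equivShrink P.toSet).symm tt).1) with hf
  have hmemf : ∀ p : ZFSet, p ∈ f ↔ ∃ x ∈ P, p = ZFSet.pair ∅ x := by
    intro p
    rw [hf, ZFSet.mem_range]
    constructor
    · rintro ⟨i, rfl⟩; exact ⟨_, ((equivShrink P.toSet).symm i).2, rfl⟩
    · rintro ⟨x, hx, rfl⟩
      exact ⟨equivShrink P.toSet ⟨x, hx⟩, by simp⟩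
  refine ⟨f, ?_, ?_, ?_⟩
  · have : f.rank ≤ α.rank + 1 + 1 + 1 := by
      rw [ZFSet.rank_le_iff]
      intro p hp
      obtain ⟨x, hx, rfl⟩ := (hmemf p).1 hp
      have h1 : (∅ : ZFSet).rank ≤ α.rank := by simp
      have h2 : x.rank ≤ α.rank := ZFSet.rank_mono (ZFSet.mem_powerset.1 hx)
      calc (ZFSet.pair ∅ x).rank ≤ α.rank + 1 + 1 := rank_pair_le h1 h2
        _ < α.rank + 1 + 1 + 1 := lt_add_one _
    exact lt_of_le_of_lt this
      (succ_lt_of_limit ho (succ_lt_of_limit ho (succ_lt_of_limit ho hαr)))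
  · intro p hp
    obtain ⟨x, _, rfl⟩ := (hmemf p).1 hp
    exact ⟨x, rfl⟩
  · intro x hx
    exact (hmemf _).2 ⟨x, ZFSet.mem_powerset.2 hx, rfl⟩

/-- If `κ` is inaccessible and `(N,∈)` is a proper elementary end extension
of `(V_κ,∈)` with `N` transitive, then `κ ∈ N` and `(N,∈)` satisfies "`κ` is an inaccessible
cardinal", i.e. `N` thinks `κ` is an uncountable regular strong limit cardinal. -/
theorem inaccessible_in_eee
    (κ : Cardinal) (hκ : κ.IsInaccessible)
    (κZ : ZFSet) (hκZ : κZ.IsOrdinal)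
    (hheight : ∀ x : ZFSet, (x ∈ Vclass κ.ord ∧ x.IsOrdinal) ↔ x ∈ κZ)
    (N : ZFSet) (hNtr : N.IsTransitive)
    (hEEE : IsProperEEESets (Vclass κ.ord) N.toSet) :
    κZ ∈ N ∧ SatisfiesRegularCardinal N κZ ∧ ZFSet.omega ∈ κZ ∧
      SatisfiesStrongLimit N κZ := by
  classical
  obtain ⟨hsub, hne, _hend, helem⟩ := hEEE
  have hℵ0 : (Cardinal.aleph0 : Cardinal) < κ := hκ.1
  have hord : Order.IsSuccLimit κ.ord := Cardinal.isSuccLimit_ord hℵ0.le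
  -- membership in κZ
  have hmemκZ : ∀ z : ZFSet, z ∈ κZ ↔ z.IsOrdinal ∧ z.rank < κ.ord := by
    intro z
    rw [← hheight z, mem_Vclass, and_comm]
  -- κZ is the von Neumann ordinal of κ.ord
  have hκZrank : κZ.rank = κ.ord := by
    apply le_antisymm
    · rw [ZFSet.rank_le_iff]
      intro z hz
      exact ((hmemκZ z).1 hz).2
    · refine le_of_forall_lt fun a ha => ?_
      have : ordToZF a ∈ κZ := (hmemκZ _).2 ⟨isOrdinal_ordToZF a, by simpa using ha⟩
      simpa using ZFSet.rank_lt_of_mem this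
  have hκZ_eq : κZ = ordToZF κ.ord := by
    rw [eq_ordToZF_of_isOrdinal hκZ, hκZrank]
  -- ω ∈ κZ
  have hω : ZFSet.omega ∈ κZ := by
    refine (hmemκZ _).2 ⟨?_, ?_⟩
    · rw [omega_eq_ordToZF]; exact isOrdinal_ordToZF _
    · rw [omega_eq_ordToZF, rank_ordToZF]
      exact Cardinal.lt_ord.2 (by rw [Ordinal.card_omega0]; exact hℵ0)
  -- part 1 : κZ ∈ N
  have hκZN : κZ ∈ N := by
    have hnsub : ¬ N.toSet ⊆ Vclass κ.ord := fun h => hne (Set.Subset.antisymm hsub h)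
    obtain ⟨z, hzN, hzV⟩ := Set.not_subset.1 hnsub
    have hzr : κ.ord ≤ z.rank := not_lt.1 hzV
    -- transport the rank sentence
    have hV : rankΦProp (Vclass κ.ord) := rankΦProp_Vclass hord
    have hΦV : Formula.Realize rankΦ (fun i : Fin 0 => i.elim0) := (realize_rankΦ _).2 hV
    have hΦN := (helem 0 rankΦ (fun i : Fin 0 => i.elim0)).2 hΦV
    have hNprop : rankΦProp N.toSet := (realize_rankΦ _).1 hΦN
    have hNdown : ∀ p ∈ N.toSet, ∀ q ∈ p, q ∈ N.toSet := by
      intro p hp q hq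
      exact hNtr p hp hq
    obtain ⟨t, hzt, htrans, htN, y, ⟨hytrans, hytri⟩, hyN, F, hC4, hFN, hC5⟩ := hNprop z hzN
    -- real transitivity of t
    have htrans' : ∀ w ∈ t, ∀ u ∈ w, u ∈ t := by
      intro w hw u hu
      exact htrans w (hNdown t htN w hw) hw u (hNdown w (hNdown t htN w hw) u hu) hu
    -- the rank function coded by F is genuinely rank-increasing
    have main : ∀ w : ZFSet, w ∈ t → ∀ v ∈ N.toSet, pmProp N.toSet w v F → w.rank ≤ v.rank := by
      intro w
      induction w using ZFSet.inductionOn with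
      | _ w ih =>
        intro hwt v hvN hpm
        rw [ZFSet.rank_le_iff]
        intro u huw
        have hut : u ∈ t := htrans' w hwt u huw
        have huN : u ∈ N.toSet := hNdown t htN u hut
        obtain ⟨v', hv'y, hv'N, hpm'⟩ := hC4 u huN hut
        have h1 : u.rank ≤ v'.rank := ih u huw hut v' hv'N hpm'
        have h2 : v' ∈ v := hC5 w (hNdown t htN w hwt) hwt u huN huw v hvN v' hv'N hpm hpm'
        exact lt_of_le_of_lt h1 (ZFSet.rank_lt_of_mem h2)
    obtain ⟨v, hvy, hvN, hpm⟩ := hC4 z hzN hzt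
    have hzv : z.rank ≤ v.rank := main z hzt v hvN hpm
    -- y is a real ordinal
    have hyOrd : y.IsOrdinal := by
      apply isOrdinal_of_trichotomy
      · intro a ha b hb
        exact hytrans a (hNdown y hyN a ha) ha b (hNdown a (hNdown y hyN a ha) b hb) hb
      · intro a ha b hb
        exact hytri a (hNdown y hyN a ha) ha b (hNdown y hyN b hb) hb
    have hκy : κ.ord < y.rank :=
      lt_of_le_of_lt (hzr.trans hzv) (ZFSet.rank_lt_of_mem hvy)
    have hκZy : κZ ∈ y := by
      rw [eq_ordToZF_of_isOrdinal hyOrd, hκZ_eq]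
      exact ordToZF_mem_ordToZF.2 hκy
    exact hNtr y hyN hκZy
  refine ⟨hκZN, ⟨hκZ, Or.inl hω, ?_, ?_⟩, hω, ?_⟩
  · -- successor closure
    intro x hx
    obtain ⟨hxo, hxr⟩ := (hmemκZ x).1 hx
    refine (hmemκZ _).2 ⟨?_, ?_⟩
    · rw [eq_ordToZF_of_isOrdinal hxo, ← ordToZF_succ]
      exact isOrdinal_ordToZF _
    · have : insert x x = ordToZF (x.rank + 1) := by
        rw [ordToZF_succ, ← eq_ordToZF_of_isOrdinal hxo]
      rw [this, rank_ordToZF]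
      exact succ_lt_of_limit hord hxr
  · -- regularity
    intro f _hfN α hακ hfunc
    obtain ⟨hαo, hαr⟩ := (hmemκZ α).1 hακ
    have hα_eq : α = ordToZF α.rank := eq_ordToZF_of_isOrdinal hαo
    set a := α.rank with ha
    set W : Ordinal → ZFSet := fun b => Classical.epsilon fun w => ZFSet.pair (ordToZF b) w ∈ f
      with hWdef
    set s := ⨆ i : a.ToType, ((W ((Ordinal.ToType.mk (o := a)).symm i).1).rank + 1) with hs
    have hWspec : ∀ b < a, ZFSet.pair (ordToZF b) (W b) ∈ f := by
      intro b hb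
      have hmem : ordToZF b ∈ α := by rw [hα_eq]; exact ordToZF_mem_ordToZF.2 hb
      obtain ⟨w, hw, _⟩ := hfunc.2 (ordToZF b) hmem
      exact Classical.epsilon_spec (p := fun w => ZFSet.pair (ordToZF b) w ∈ f) ⟨w, hw⟩
    have hWκZ : ∀ b < a, W b ∈ κZ := by
      intro b hb
      have := hfunc.1 (hWspec b hb)
      exact (ZFSet.pair_mem_prod.1 this).2
    have hslt : s < κ.ord := by
      apply Ordinal.iSup_lt_of_lt_cof
      · rw [Cardinal.mk_toType]
        exact lt_of_lt_of_le (Cardinal.lt_ord.1 hαr) hκ.le_cof_ord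
      · intro i
        have hb : (((Ordinal.ToType.mk (o := a)).symm i : Set.Iio a) : Ordinal) < a :=
          ((Ordinal.ToType.mk (o := a)).symm i).2
        have := ((hmemκZ _).1 (hWκZ _ hb)).2
        exact succ_lt_of_limit hord this
    refine ⟨ordToZF s, (hmemκZ _).2 ⟨isOrdinal_ordToZF s, by simpa using hslt⟩, ?_⟩
    intro aa haa y hy
    rw [hα_eq] at haa
    obtain ⟨b, hb, rfl⟩ := mem_ordToZF.1 haa
    have hyW : y = W b := by
      obtain ⟨w, _, huniq⟩ := hfunc.2 (ordToZF b) (by rw [hα_eq]; exact ordToZF_mem_ordToZF.2 hb)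
      rw [huniq y hy, huniq (W b) (hWspec b hb)]
    have hyκZ : y ∈ κZ := (ZFSet.pair_mem_prod.1 (hfunc.1 hy)).2
    have hyrank : y.rank < s := by
      have hle : (W ((Ordinal.ToType.mk (o := a)).symm (Ordinal.ToType.mk (o := a) ⟨b, hb⟩)).1).rank + 1 ≤ s := by
        rw [hs]
        exact Ordinal.le_iSup (fun i => ((W ((Ordinal.ToType.mk (o := a)).symm i).1).rank + 1)) _
      rw [OrderIso.symm_apply_apply] at hle
      rw [hyW]
      exact lt_of_lt_of_le (lt_add_one _) hle
    refine Or.inl ?_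
    rw [eq_ordToZF_of_isOrdinal ((hmemκZ y).1 hyκZ).1]
    exact ordToZF_mem_ordToZF.2 hyrank
  · -- strong limit
    intro α hακ
    obtain ⟨_, hαr⟩ := (hmemκZ α).1 hακ
    obtain ⟨f, hfr, hfpairs, hfcover⟩ := strongLimit_aux hord hαr
    have hβ : ordToZF 1 ∈ κZ := by
      refine (hmemκZ _).2 ⟨isOrdinal_ordToZF 1, ?_⟩
      simpa using Ordinal.one_lt_of_isSuccLimit hord
    have hzeroβ : (∅ : ZFSet) ∈ ordToZF 1 := by
      refine mem_ordToZF.2 ⟨0, zero_lt_one, ordToZF_zero.symm⟩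
    refine ⟨ordToZF 1, hβ, f, ?_, ?_, ?_⟩
    · exact hsub (mem_Vclass.2 hfr)
    · intro p hp
      obtain ⟨y, rfl⟩ := hfpairs p hp
      exact ⟨∅, y, hzeroβ, rfl⟩
    · intro x _ hxα
      exact ⟨∅, hzeroβ, hfcover x hxα⟩
end

section
/- Let κ be an uncountable regular cardinal. Then the poset P_κ is (<κ⁺)-closed: every decreasing sequence ⟨p_ξ : ξ < λ⟩ of conditions in P_κ of length λ < κ⁺ has a lower bound in P_κ. -/
/-- `C` is club in `α`: a subset of `α` that is unbounded in `α` and contains every limit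
ordinal `β < α` in which `C ∩ β` is unbounded. -/
def IsClubIn (C : Set Ordinal) (α : Ordinal) : Prop :=
  C ⊆ Set.Iio α ∧ (∀ β < α, ∃ γ ∈ C, β ≤ γ) ∧
    ∀ β < α, Order.IsSuccLimit β → (∀ x < β, ∃ γ ∈ C, x ≤ γ ∧ γ < β) → β ∈ C

/-- A condition of the poset `P_κ`: a triple `(top, E, C)` where `top < κ⁺⁺` has cofinality
`κ⁺`, `E` is a set of ordinals `β < top` of cofinality `κ`, and `C` assigns to each `β < top`
of cofinality `κ⁺` a club in `β` disjoint from `E`. -/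
structure PCond (κ : Cardinal) where
  top : Ordinal
  E : Set Ordinal
  C : ∀ β : Ordinal, β < top → β.cof = Order.succ κ → Set Ordinal
  top_lt : top < (Order.succ (Order.succ κ)).ord
  top_cof : top.cof = Order.succ κ
  E_sub : ∀ β ∈ E, β < top ∧ β.cof = κ
  C_club : ∀ (β : Ordinal) (h1 : β < top) (h2 : β.cof = Order.succ κ), IsClubIn (C β h1 h2) β
  C_disj : ∀ (β : Ordinal) (h1 : β < top) (h2 : β.cof = Order.succ κ), C β h1 h2 ∩ E = ∅

/-- The order of `P_κ`: `q ≤ p` iff `q` end-extends `p`. -/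
def PLe (κ : Cardinal) (q p : PCond κ) : Prop :=
  ∃ h : p.top ≤ q.top,
    q.E ∩ Set.Iio p.top = p.E ∧
    ∀ (β : Ordinal) (h1 : β < p.top) (h2 : β.cof = Order.succ κ),
      q.C β (h1.trans_le h) h2 = p.C β h1 h2

/-- For `κ` uncountable regular, the poset `P_κ` is `(<κ⁺)`-closed: every
decreasing sequence of conditions of length `l < κ⁺` has a lower bound. -/
theorem PCond_lt_succ_closed (κ : Cardinal) (hreg : κ.IsRegular)
    (hunc : Cardinal.aleph 0 < κ)
    (l : Ordinal) (hl : l < (Order.succ κ).ord)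
    (p : Ordinal → PCond κ)
    (hdec : ∀ ξ η : Ordinal, ξ ≤ η → η < l → PLe κ (p η) (p ξ)) :
    ∃ r : PCond κ, ∀ ξ < l, PLe κ r (p ξ) := by
  classical
  have hκ0 : Cardinal.aleph0 ≤ κ := hreg.aleph0_le
  have hsucc_reg : (Order.succ κ).IsRegular := Cardinal.isRegular_succ hκ0
  have hsucc2_reg : (Order.succ (Order.succ κ)).IsRegular :=
    Cardinal.isRegular_succ (hκ0.trans (Order.le_succ κ))
  rcases eq_or_ne l 0 with rfl | hl0
  · -- trivial condition
    refine ⟨⟨(Order.succ κ).ord, ∅, fun β _ _ => Set.Iio β, ?_, ?_, ?_, ?_, ?_⟩, ?_⟩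
    · exact Cardinal.ord_lt_ord.2 (Order.lt_succ _)
    · exact hsucc_reg.cof_eq
    · simp
    · intro β h1 h2
      exact ⟨fun x hx => hx, fun x hx => ⟨x, hx, le_rfl⟩, fun x hx _ _ => hx⟩
    · intro β h1 h2; simp
    · intro ξ hξ; exact absurd hξ not_lt_zero
  by_cases hAex : ∃ ξ0, ξ0 < l ∧ ∀ ξ, ξ < l → (p ξ).top ≤ (p ξ0).top
  · obtain ⟨ξ0, hξ0, hmax⟩ := hAex
    refine ⟨p ξ0, fun ξ hξ => ?_⟩
    rcases le_total ξ ξ0 with hle | hle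
    · exact hdec ξ ξ0 hle hξ0
    · obtain ⟨ht, hE, hC⟩ := hdec ξ0 ξ hle hξ
      have htop : (p ξ).top = (p ξ0).top := le_antisymm (hmax ξ hξ) ht
      have hEeq : (p ξ).E = (p ξ0).E := by
        rw [← hE]
        refine (Set.inter_eq_left.2 ?_).symm
        intro β hβ
        exact lt_of_lt_of_le ((p ξ).E_sub β hβ).1 htop.le
      refine ⟨hmax ξ hξ, ?_, ?_⟩
      · rw [← hEeq]
        exact Set.inter_eq_left.2 fun β hβ => ((p ξ).E_sub β hβ).1
      · intro β h1 h2
        have h1' : β < (p ξ0).top := htop ▸ h1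
        exact (hC β h1' h2).symm
  · push_neg at hAex
    have hEcoh : ∀ ξ η, ξ < l → η < l → ∀ β, β ∈ (p ξ).E → β < (p η).top → β ∈ (p η).E := by
      intro ξ η hξ hη β hβ hβη
      rcases le_total ξ η with h | h
      · obtain ⟨_, hE, _⟩ := hdec ξ η h hη
        rw [← hE] at hβ
        exact hβ.1
      · obtain ⟨_, hE, _⟩ := hdec η ξ h hξ
        rw [← hE]
        exact ⟨hβ, hβη⟩
    have hCcoh : ∀ ξ η (_ : ξ < l) (_ : η < l) (β : Ordinal) (h1 : β < (p ξ).top)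
        (h1' : β < (p η).top) (h2 : β.cof = Order.succ κ),
        (p ξ).C β h1 h2 = (p η).C β h1' h2 := by
      intro ξ η hξ hη β h1 h1' h2
      rcases le_total ξ η with h | h
      · obtain ⟨ht, _, hC⟩ := hdec ξ η h hη
        exact (hC β h1 h2).symm
      · obtain ⟨ht, _, hC⟩ := hdec η ξ h hξ
        exact hC β h1' h2
    set e := (Ordinal.ToType.mk (o := l)) with he
    set g : l.ToType → Ordinal := fun i => (p (e.symm i).1).top with hg
    set A := iSup g with hA'
    have hgA : ∀ ξ, ∀ _ : ξ < l, (p ξ).top ≤ A := by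
      intro ξ hξ
      have := Ordinal.le_iSup g (e ⟨ξ, hξ⟩)
      simpa [hg] using this
    have hlt : ∀ ξ, ∀ _ : ξ < l, (p ξ).top < A := by
      intro ξ hξ
      obtain ⟨η, hη, hlt⟩ := hAex ξ hξ
      exact hlt.trans_le (hgA η hη)
    have hgA2 : ∀ i, g i < A := fun i => hlt _ (e.symm i).2
    have hcofA : A.cof ≤ κ := by
      refine (Ordinal.cof_iSup_le hgA2).trans ?_
      rw [Cardinal.mk_toType]
      exact Order.lt_succ_iff.1 (Cardinal.lt_ord.1 hl)
    have hAlt : A < (Order.succ (Order.succ κ)).ord := by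
      refine Ordinal.iSup_lt_ord ?_ fun i => (p _).top_lt
      rw [Cardinal.mk_toType, hsucc2_reg.cof_eq]
      exact (Cardinal.lt_ord.1 hl).trans (Order.lt_succ _)
    have hordpos : (0 : Ordinal) < (Order.succ κ).ord := by
      rw [Cardinal.lt_ord, Ordinal.card_zero]
      exact (zero_le (a := κ)).trans_lt (Order.lt_succ κ)
    -- the lower bound
    refine ⟨⟨A + (Order.succ κ).ord, {β | ∃ ξ, ξ < l ∧ β ∈ (p ξ).E},
      fun β h1 h2 =>
        if h : ∃ ξ, ξ < l ∧ β < (p ξ).top then (p h.choose).C β h.choose_spec.2 h2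
        else Set.Ico A β, ?_, ?_, ?_, ?_, ?_⟩, ?_⟩
    · rw [Cardinal.lt_ord, Ordinal.card_add, Cardinal.card_ord]
      exact Cardinal.add_lt_of_lt (hκ0.trans ((Order.le_succ κ).trans (Order.le_succ _)))
        (Cardinal.lt_ord.1 hAlt) (Order.lt_succ _)
    · rw [Ordinal.cof_add A _, hsucc_reg.cof_eq]; exact hordpos.ne'
    · rintro β ⟨ξ, hξ, hβ⟩
      obtain ⟨hβt, hβc⟩ := (p ξ).E_sub β hβ
      refine ⟨lt_of_lt_of_le (hβt.trans (hlt ξ hξ)) (le_self_add), hβc⟩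
    · intro β h1 h2
      by_cases h : ∃ ξ, ξ < l ∧ β < (p ξ).top
      · simp only [dif_pos h]
        exact (p h.choose).C_club β h.choose_spec.2 h2
      · simp only [dif_neg h]
        push_neg at h
        have hAβ : A < β := by
          have hAle : A ≤ β := Ordinal.iSup_le fun i => h _ (e.symm i).2
          rcases hAle.lt_or_eq with h' | h'
          · exact h'
          · exfalso
            rw [h', h2] at hcofA
            exact (Order.lt_succ κ).not_ge hcofA
        refine ⟨fun x hx => hx.2, fun x hx => ⟨max x A, ⟨le_max_right _ _, max_lt hx hAβ⟩,
          le_max_left _ _⟩, ?_⟩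
        intro β' hβ' hlim hun
        obtain ⟨γ, hγ, _, hγβ'⟩ := hun 0 hlim.pos
        exact ⟨hγ.1.trans hγβ'.le, hβ'⟩
    · intro β h1 h2
      rw [Set.eq_empty_iff_forall_notMem]
      rintro x ⟨hx1, η, hη, hx2⟩
      by_cases h : ∃ ξ, ξ < l ∧ β < (p ξ).top
      · simp only [dif_pos h] at hx1
        obtain ⟨hξl, hβt⟩ := h.choose_spec
        have hxβ : x < β := ((p h.choose).C_club β hβt h2).1 hx1
        have hxE : x ∈ (p h.choose).E := hEcoh η h.choose hη hξl x hx2 (hxβ.trans hβt)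
        have := (p h.choose).C_disj β hβt h2
        rw [Set.eq_empty_iff_forall_notMem] at this
        exact this x ⟨hx1, hxE⟩
      · simp only [dif_neg h] at hx1
        have : x < A := (((p η).E_sub x hx2).1).trans_le ((hgA η hη))
        exact this.not_ge hx1.1
    · intro ξ hξ
      have htle : (p ξ).top ≤ A + (Order.succ κ).ord :=
        (hgA ξ hξ).trans (le_self_add)
      refine ⟨htle, ?_, ?_⟩
      · ext β
        constructor
        · rintro ⟨⟨η, hη, hβ⟩, hlt'⟩
          exact hEcoh η ξ hη hξ β hβ hlt'
        · intro hβ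
          exact ⟨⟨ξ, hξ, hβ⟩, ((p ξ).E_sub β hβ).1⟩
      · intro β h1 h2
        have hex : ∃ ζ, ζ < l ∧ β < (p ζ).top := ⟨ξ, hξ, h1⟩
        show (if h : ∃ ζ, ζ < l ∧ β < (p ζ).top then (p h.choose).C β h.choose_spec.2 h2
          else Set.Ico A β) = _
        rw [dif_pos hex]
        exact hCcoh hex.choose ξ hex.choose_spec.1 hξ β hex.choose_spec.2 h1 h2
end

section
/- Let κ be an uncountable regular cardinal and let ⟨p_ξ : ξ < κ⟩ be a decreasing sequence of conditions in P_κ such that the ordinals α_{p_ξ} are strictly increasing, and set α* = sup_{ξ<κ} α_{p_ξ}. Then there exists a condition r ∈ P_κ such that r ≤ p_ξ for every ξ < κ and α* ∈ E_r. -/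
/-- For `κ` uncountable regular and a decreasing `κ`-sequence of conditions
of `P_κ` with strictly increasing tops, there is a lower bound `r` with
`α* = sup_ξ top(p_ξ) ∈ E_r`. -/
theorem PCond_add_sup_to_E (κ : Cardinal) (hreg : κ.IsRegular)
    (hunc : Cardinal.aleph 0 < κ)
    (p : Ordinal → PCond κ)
    (hdec : ∀ ξ η : Ordinal, ξ ≤ η → η < κ.ord → PLe κ (p η) (p ξ))
    (hinc : ∀ ξ η : Ordinal, ξ < η → η < κ.ord → (p ξ).top < (p η).top)
    (αstar : Ordinal)
    (hsup : αstar = sSup ((fun ξ => (p ξ).top) '' Set.Iio κ.ord)) :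
    ∃ r : PCond κ, (∀ ξ < κ.ord, PLe κ r (p ξ)) ∧ αstar ∈ r.E := by
  classical
  have hκ0 : Cardinal.aleph0 ≤ κ := hreg.aleph0_le
  have hlim : Order.IsSuccLimit κ.ord := Cardinal.isSuccLimit_ord hκ0
  have hb : αstar = Ordinal.bsup κ.ord (fun ξ _ => (p ξ).top) := by
    rw [hsup, ← Ordinal.sSup_eq_bsup]
    congr 1
    ext x
    simp only [Set.mem_image, Set.mem_Iio, Ordinal.mem_brange]
    constructor
    · rintro ⟨ξ, hξ, rfl⟩; exact ⟨ξ, hξ, rfl⟩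
    · rintro ⟨ξ, hξ, rfl⟩; exact ⟨ξ, hξ, rfl⟩
  have hmono : ∀ ξ η, ξ ≤ η → η < κ.ord → (p ξ).top ≤ (p η).top := by
    intro ξ η hle hη
    rcases hle.lt_or_eq with h | rfl
    · exact (hinc ξ η h hη).le
    · exact le_rfl
  have hub : ∀ ξ, ξ < κ.ord → (p ξ).top ≤ αstar := by
    intro ξ hξ; rw [hb]; exact Ordinal.le_bsup _ ξ hξ
  have hltα : ∀ ξ, ξ < κ.ord → (p ξ).top < αstar := by
    intro ξ hξ
    have hs : Order.succ ξ < κ.ord := hlim.succ_lt hξ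
    exact (hinc ξ (Order.succ ξ) (Order.lt_succ ξ) hs).trans_le (hub _ hs)
  have hex : ∀ β, β < αstar → ∃ ξ, ξ < κ.ord ∧ β < (p ξ).top := by
    intro β hβ
    rw [hb] at hβ
    obtain ⟨ξ, hξ, h⟩ := (Ordinal.lt_bsup _).1 hβ
    exact ⟨ξ, hξ, h⟩
  have hblsub : αstar = Ordinal.blsub κ.ord (fun ξ _ => (p ξ).top) := by
    rw [hb]
    exact (Ordinal.bsup_eq_blsub_iff_lt_bsup _).2 fun ξ hξ => by
      rw [← hb]; exact hltα ξ hξ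
  have hcofle : αstar.cof ≤ κ := by
    rw [hblsub]
    simpa [Cardinal.card_ord] using Ordinal.cof_blsub_le (fun ξ (_ : ξ < κ.ord) => (p ξ).top)
  have hcofge : κ ≤ αstar.cof := by
    rw [Ordinal.le_cof_iff_blsub]
    intro o f hf
    by_contra hno
    push_neg at hno
    have hoc : o.card < κ.ord.cof := by rwa [hreg.cof_eq]
    have hgex : ∀ i (hi : i < o), ∃ ξ, ξ < κ.ord ∧ f i hi < (p ξ).top := by
      intro i hi
      apply hex
      rw [← hf]
      exact Ordinal.lt_blsub f i hi
    have hglt : Ordinal.bsup o (fun i hi => (hgex i hi).choose) < κ.ord :=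
      Ordinal.bsup_lt_ord hoc (fun i hi => (hgex i hi).choose_spec.1)
    have hle : αstar ≤ (p (Ordinal.bsup o (fun i hi => (hgex i hi).choose))).top := by
      rw [← hf]
      apply Ordinal.blsub_le
      intro i hi
      exact ((hgex i hi).choose_spec.2).trans_le
        (hmono _ _ (Ordinal.le_bsup _ i hi) hglt)
    exact absurd (hle.trans_lt (hltα _ hglt)) (lt_irrefl _)
  have hcofα : αstar.cof = κ := le_antisymm hcofle hcofge
  have hsucc : (Order.succ κ).IsRegular := Cardinal.isRegular_succ hκ0
  have hsucc2 : (Order.succ (Order.succ κ)).IsRegular := Cardinal.isRegular_succ hsucc.aleph0_le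
  have hαlt : αstar < (Order.succ (Order.succ κ)).ord := by
    rw [hb]
    apply Cardinal.bsup_lt_ord_of_isRegular hsucc2
    · rw [Cardinal.card_ord]
      exact (Order.lt_succ κ).trans (Order.lt_succ _)
    · exact fun ξ _ => (p ξ).top_lt
  have hpos : (0 : Ordinal) < (Order.succ κ).ord := (Cardinal.isSuccLimit_ord hsucc.aleph0_le).pos
  have hαrtop : αstar < αstar + (Order.succ κ).ord := by
    simpa using add_lt_add_left hpos αstar
  set rE : Set Ordinal := insert αstar (⋃ ξ ∈ Set.Iio κ.ord, (p ξ).E) with hrE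
  have hmemE : ∀ x, x ∈ rE ↔ x = αstar ∨ ∃ ξ, ξ < κ.ord ∧ x ∈ (p ξ).E := by
    intro x
    simp only [hrE, Set.mem_insert_iff, Set.mem_iUnion, Set.mem_Iio, exists_prop]
  have hEcap : ∀ ξ η, ξ < κ.ord → η < κ.ord → ∀ x, x ∈ (p η).E → x < (p ξ).top →
      x ∈ (p ξ).E := by
    intro ξ η hξ hη x hx hxlt
    rcases le_total ξ η with h | h
    · obtain ⟨_, hE, _⟩ := hdec ξ η h hη
      rw [← hE]; exact ⟨hx, hxlt⟩
    · obtain ⟨_, hE, _⟩ := hdec η ξ h hξ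
      rw [← hE] at hx; exact hx.1
  have hcoh : ∀ ξ η (hξ : ξ < κ.ord) (hη : η < κ.ord) β (h1 : β < (p ξ).top)
      (h1' : β < (p η).top) (h2 : β.cof = Order.succ κ),
      (p ξ).C β h1 h2 = (p η).C β h1' h2 := by
    intro ξ η hξ hη β h1 h1' h2
    rcases le_total ξ η with h | h
    · obtain ⟨hto, _, hC⟩ := hdec ξ η h hη
      exact (hC β h1 h2).symm
    · obtain ⟨hto, _, hC⟩ := hdec η ξ h hξ
      exact hC β h1' h2
  refine ⟨⟨αstar + (Order.succ κ).ord, rE,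
      fun β h1 h2 =>
        if hβ : β < αstar then
          (p (hex β hβ).choose).C β (hex β hβ).choose_spec.2 h2
        else Set.Ioo αstar β,
      ?_, ?_, ?_, ?_, ?_⟩, ?_, ?_⟩
  · -- top_lt
    rw [Cardinal.lt_ord, Ordinal.card_add, Cardinal.card_ord]
    apply Cardinal.add_lt_of_lt hsucc2.aleph0_le
    · rwa [← Cardinal.lt_ord]
    · exact Order.lt_succ _
  · -- top_cof
    rw [Ordinal.cof_add _ hpos.ne', hsucc.cof_eq]
  · -- E_sub
    intro β hβ
    rcases (hmemE β).1 hβ with rfl | ⟨ξ, hξ, hmem⟩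
    · exact ⟨hαrtop, hcofα⟩
    · obtain ⟨hh1, hh2⟩ := (p ξ).E_sub β hmem
      exact ⟨hh1.trans ((hltα ξ hξ).trans hαrtop), hh2⟩
  · -- C_club
    intro β h1 h2
    by_cases hβ : β < αstar
    · rw [dif_pos hβ]
      exact (p _).C_club β _ h2
    · rw [dif_neg hβ]
      have hαβ : αstar < β := by
        rcases (not_lt.1 hβ).lt_or_eq with h | h
        · exact h
        · exfalso
          rw [← h, hcofα] at h2
          exact (Order.lt_succ κ).ne h2
      have hβlim : Order.IsSuccLimit β := Ordinal.aleph0_le_cof.1 (by rw [h2]; exact hsucc.aleph0_le)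
      refine ⟨fun x hx => hx.2, ?_, ?_⟩
      · intro x hx
        refine ⟨max x (Order.succ αstar),
          ⟨(Order.lt_succ αstar).trans_le (le_max_right _ _),
            max_lt hx (hβlim.succ_lt hαβ)⟩, le_max_left _ _⟩
      · intro β' hβ'β hβ'lim H
        obtain ⟨γ, hγ, _, hγβ'⟩ := H 0 hβ'lim.pos
        exact ⟨hγ.1.trans hγβ', hβ'β⟩
  · -- C_disj
    intro β h1 h2
    by_cases hβ : β < αstar
    · rw [dif_pos hβ]
      apply Set.eq_empty_iff_forall_notMem.2
      rintro x ⟨hxC, hxE⟩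
      have hξ : (hex β hβ).choose < κ.ord := (hex β hβ).choose_spec.1
      have hβξ : β < (p (hex β hβ).choose).top := (hex β hβ).choose_spec.2
      have hxβ : x < β := ((p (hex β hβ).choose).C_club β hβξ h2).1 hxC
      rcases (hmemE x).1 hxE with rfl | ⟨η, hη, hmem⟩
      · exact absurd (hxβ.trans hβ) (lt_irrefl _)
      · have hxξ : x ∈ (p (hex β hβ).choose).E :=
          hEcap _ η hξ hη x hmem (hxβ.trans hβξ)
        have hd := (p (hex β hβ).choose).C_disj β hβξ h2
        have : x ∈ (∅ : Set Ordinal) := hd ▸ Set.mem_inter hxC hxξ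
        exact this
    · rw [dif_neg hβ]
      apply Set.eq_empty_iff_forall_notMem.2
      rintro x ⟨hxI, hxE⟩
      rcases (hmemE x).1 hxE with rfl | ⟨η, hη, hmem⟩
      · exact absurd hxI.1 (lt_irrefl _)
      · have hxα : x < αstar := (((p η).E_sub x hmem).1).trans_le (hub η hη)
        exact absurd (hxα.trans hxI.1) (lt_irrefl _)
  · -- PLe
    intro ξ hξ
    refine ⟨(hub ξ hξ).trans hαrtop.le, ?_, ?_⟩
    · ext x
      simp only [Set.mem_inter_iff, Set.mem_Iio]
      constructor
      · rintro ⟨hxE, hxlt⟩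
        rcases (hmemE x).1 hxE with rfl | ⟨η, hη, hmem⟩
        · exact absurd (hxlt.trans_le (hub ξ hξ)) (lt_irrefl _)
        · exact hEcap ξ η hξ hη x hmem hxlt
      · intro hx
        exact ⟨(hmemE x).2 (Or.inr ⟨ξ, hξ, hx⟩), ((p ξ).E_sub x hx).1⟩
    · intro β h1 h2
      have hβ : β < αstar := h1.trans (hltα ξ hξ)
      dsimp only
      rw [dif_pos hβ]
      exact hcoh _ ξ (hex β hβ).choose_spec.1 hξ β (hex β hβ).choose_spec.2 h1 h2
  · exact (hmemE αstar).2 (Or.inl rfl)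
end
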